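/- arXiv:1406.6683 — 7 statements merged into one kernel-verified Lean document; each statement's English description precedes it below -/
import Mathlib

section
/- Monotonicity of pLTL_◇: for every pLTL_◇ formula φ, every infinite word w : ℕ → Set AP, and all valuations v, v' : Var → ℕ with v(x) ≤ v'(x) for every x ∈ Var, if (w,0,v) ⊨ φ then (w,0,v') ⊨ φ. -/
/-- Syntax of the fragment pLTL_◇ : φ ::= a | ¬a | φ∧φ | φ∨φ | ○φ | φUφ | φRφ | □φ |
    ◇_{≤x}φ | ◇_{≤c}φ | □_{≤c}φ. -/
inductive PLTLd (AP Var : Type) : Type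
  | atom : AP → PLTLd AP Var
  | natom : AP → PLTLd AP Var
  | and : PLTLd AP Var → PLTLd AP Var → PLTLd AP Var
  | or : PLTLd AP Var → PLTLd AP Var → PLTLd AP Var
  | next : PLTLd AP Var → PLTLd AP Var
  | untl : PLTLd AP Var → PLTLd AP Var → PLTLd AP Var
  | release : PLTLd AP Var → PLTLd AP Var → PLTLd AP Var
  | always : PLTLd AP Var → PLTLd AP Var
  | evVar : Var → PLTLd AP Var → PLTLd AP Var
  | evConst : ℕ → PLTLd AP Var → PLTLd AP Var
  | alwConst : ℕ → PLTLd AP Var → PLTLd AP Var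

/-- Satisfaction relation `(w,i,v) ⊨ φ` for pLTL_◇. -/
def PLTLd.Sat {AP Var : Type} (w : ℕ → Set AP) : ℕ → (Var → ℕ) → PLTLd AP Var → Prop
  | i, _, atom a => a ∈ w i
  | i, _, natom a => a ∉ w i
  | i, v, and φ ψ => PLTLd.Sat w i v φ ∧ PLTLd.Sat w i v ψ
  | i, v, or φ ψ => PLTLd.Sat w i v φ ∨ PLTLd.Sat w i v ψ
  | i, v, next φ => PLTLd.Sat w (i + 1) v φ
  | i, v, untl φ ψ =>
      ∃ j, i ≤ j ∧ PLTLd.Sat w j v ψ ∧ ∀ k, i ≤ k → k < j → PLTLd.Sat w k v φ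
  | i, v, release φ ψ =>
      ∀ j, i ≤ j → (PLTLd.Sat w j v ψ ∨ ∃ k, i ≤ k ∧ k < j ∧ PLTLd.Sat w k v φ)
  | i, v, always φ => ∀ j, i ≤ j → PLTLd.Sat w j v φ
  | i, v, evVar x φ => ∃ j, i ≤ j ∧ j ≤ v x + i ∧ PLTLd.Sat w j v φ
  | i, v, evConst c φ => ∃ j, i ≤ j ∧ j ≤ c + i ∧ PLTLd.Sat w j v φ
  | i, v, alwConst c φ => ∀ j, i ≤ j → j ≤ c + i → PLTLd.Sat w j v φ


theorem pLTLd_monotone_aux {AP Var : Type} (φ : PLTLd AP Var) (w : ℕ → Set AP)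
    (v v' : Var → ℕ) (hvv' : ∀ x, v x ≤ v' x) :
    ∀ i, PLTLd.Sat w i v φ → PLTLd.Sat w i v' φ := by
  induction φ with
  | atom a => intro i h; exact h
  | natom a => intro i h; exact h
  | and φ ψ ih1 ih2 => intro i h; exact ⟨ih1 i h.1, ih2 i h.2⟩
  | or φ ψ ih1 ih2 => intro i h; exact h.imp (ih1 i) (ih2 i)
  | next φ ih => intro i h; exact ih _ h
  | untl φ ψ ih1 ih2 =>
    intro i ⟨j, hij, hψ, hφ⟩
    exact ⟨j, hij, ih2 j hψ, fun k hk1 hk2 => ih1 k (hφ k hk1 hk2)⟩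
  | release φ ψ ih1 ih2 =>
    intro i h j hj
    rcases h j hj with h | ⟨k, hk1, hk2, hk⟩
    · exact Or.inl (ih2 j h)
    · exact Or.inr ⟨k, hk1, hk2, ih1 k hk⟩
  | always φ ih => intro i h j hj; exact ih j (h j hj)
  | evVar x φ ih =>
    intro i ⟨j, hij, hjb, hj⟩
    exact ⟨j, hij, hjb.trans (Nat.add_le_add_right (hvv' x) i), ih j hj⟩
  | evConst c φ ih =>
    intro i ⟨j, hij, hjb, hj⟩
    exact ⟨j, hij, hjb, ih j hj⟩
  | alwConst c φ ih =>
    intro i h j hj1 hj2; exact ih j (h j hj1 hj2)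

/-- Monotonicity of pLTL_◇: if `v ≤ v'` pointwise and `(w,0,v) ⊨ φ`, then `(w,0,v') ⊨ φ`. -/
theorem pLTLd_monotone {AP Var : Type} (φ : PLTLd AP Var) (w : ℕ → Set AP)
    (v v' : Var → ℕ) (hvv' : ∀ x, v x ≤ v' x) (h : PLTLd.Sat w 0 v φ) :
    PLTLd.Sat w 0 v' φ := by
  exact pLTLd_monotone_aux φ w v v' hvv' 0 h
end

section
/- For every pLTL formula φ, infinite word w : ℕ → Set AP, position i ∈ ℕ and valuation v : Var → ℕ: (1) (w,i,v) ⊨ ◇_{>x}φ if and only if (w,i,v) ⊨ □_{≤x}◇○φ; and (2) (w,i,v) ⊨ □_{>x}φ if and only if (w,i,v) ⊨ ◇_{≤x}□○φ. -/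
/-- Comparison operators ≺ ∈ {=, ≤, <, >, ≥}. -/
inductive PCmp : Type
  | eq | le | lt | gt | ge

def PCmp.holds : PCmp → ℕ → ℕ → Prop
  | eq, a, b => a = b
  | le, a, b => a ≤ b
  | lt, a, b => a < b
  | gt, a, b => a > b
  | ge, a, b => a ≥ b

/-- Syntax of pLTL: φ ::= true | a | ¬φ | φ∧φ | ○φ | φUφ | ◇_{≺x}φ | ◇_{≺c}φ. -/
inductive PLTL (AP Var : Type) : Type
  | tt : PLTL AP Var
  | atom : AP → PLTL AP Var
  | not : PLTL AP Var → PLTL AP Var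
  | and : PLTL AP Var → PLTL AP Var → PLTL AP Var
  | next : PLTL AP Var → PLTL AP Var
  | untl : PLTL AP Var → PLTL AP Var → PLTL AP Var
  | evVar : PCmp → Var → PLTL AP Var → PLTL AP Var
  | evConst : PCmp → ℕ → PLTL AP Var → PLTL AP Var

/-- Satisfaction relation `(w,i,v) ⊨ φ` for pLTL. -/
def PLTL.Sat {AP Var : Type} (w : ℕ → Set AP) : ℕ → (Var → ℕ) → PLTL AP Var → Prop
  | _, _, tt => True
  | i, _, atom a => a ∈ w i
  | i, v, not φ => ¬ PLTL.Sat w i v φ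
  | i, v, and φ ψ => PLTL.Sat w i v φ ∧ PLTL.Sat w i v ψ
  | i, v, next φ => PLTL.Sat w (i + 1) v φ
  | i, v, untl φ ψ =>
      ∃ j, i ≤ j ∧ PLTL.Sat w j v ψ ∧ ∀ k, i ≤ k → k < j → PLTL.Sat w k v φ
  | i, v, evVar c x φ => ∃ j, i ≤ j ∧ c.holds j (v x + i) ∧ PLTL.Sat w j v φ
  | i, v, evConst c n φ => ∃ j, i ≤ j ∧ c.holds j (n + i) ∧ PLTL.Sat w j v φ

namespace PLTL

variable {AP Var : Type}

/-- ◇φ := true U φ. -/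
def ev (φ : PLTL AP Var) : PLTL AP Var := untl tt φ

/-- □φ := ¬◇¬φ. -/
def box (φ : PLTL AP Var) : PLTL AP Var := not (ev (not φ))

/-- ◇_{≤x}φ. -/
def evLe (x : Var) (φ : PLTL AP Var) : PLTL AP Var := evVar PCmp.le x φ

/-- ◇_{>x}φ. -/
def evGt (x : Var) (φ : PLTL AP Var) : PLTL AP Var := evVar PCmp.gt x φ

/-- □_{≤x}φ := ¬◇_{≤x}¬φ. -/
def boxLe (x : Var) (φ : PLTL AP Var) : PLTL AP Var := not (evVar PCmp.le x (not φ))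

/-- □_{>x}φ := ¬◇_{>x}¬φ. -/
def boxGt (x : Var) (φ : PLTL AP Var) : PLTL AP Var := not (evVar PCmp.gt x (not φ))

end PLTL

/-- (1) ◇_{>x}φ ≡ □_{≤x}◇○φ  and  (2) □_{>x}φ ≡ ◇_{≤x}□○φ. -/
theorem pLTL_evGt_boxGt_equiv {AP Var : Type} (φ : PLTL AP Var) (w : ℕ → Set AP)
    (i : ℕ) (v : Var → ℕ) (x : Var) :
    (PLTL.Sat w i v (PLTL.evGt x φ) ↔
      PLTL.Sat w i v (PLTL.boxLe x (PLTL.ev (PLTL.next φ)))) ∧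
    (PLTL.Sat w i v (PLTL.boxGt x φ) ↔
      PLTL.Sat w i v (PLTL.evLe x (PLTL.box (PLTL.next φ)))) := by
  simp only [PLTL.evGt, PLTL.boxLe, PLTL.evLe, PLTL.boxGt, PLTL.ev, PLTL.box,
    PLTL.Sat, PCmp.holds]
  simp only [gt_iff_lt, not_exists, not_and, not_not, not_lt, not_forall, true_and,
    and_imp, forall_const, not_true_eq_false, exists_prop, and_false, exists_false,
    imp_false, forall_exists_index]
  refine ⟨⟨?_, ?_⟩, ?_, ?_⟩
  · rintro ⟨j, hij, hgt, hφ⟩ k hik hk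
    exact ⟨j - 1, by omega, by rwa [Nat.sub_add_cancel (by omega)]⟩
  · intro h
    obtain ⟨m, hm, hφ⟩ := h (v x + i) (by omega) le_rfl
    exact ⟨m + 1, by omega, by omega, hφ⟩
  · intro h
    exact ⟨v x + i, by omega, le_rfl, fun m hm => h (m + 1) (by omega) (by omega)⟩
  · rintro ⟨j, hij, hjle, h⟩ m him hm
    have := h (m - 1) (by omega)
    rwa [Nat.sub_add_cancel (by omega)] at this
end

section
/- Let M = (S,P,s₀,L) be a finite Markov chain, a ∈ AP, and T = {s ∈ S | a ∈ L(s)}. Consider the states reachable from s₀ by path fragments whose states avoid T. (1) If among these T-avoiding reachable states there is a directed cycle in the digraph of M, then Pr{π | π_j ∈ T for some j ≤ n} < 1 for every n ∈ ℕ, i.e. V_{=1}(◇_{≤x} a) = ∅. (2) Otherwise (the digraph restricted to these states is acyclic), V_{=1}(◇_{≤x} a) ≠ ∅ and its minimum equals the length of a longest path fragment from s₀ to T whose states before the last one avoid T. -/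
open MeasureTheory
open scoped ENNReal

/-!
A `T`-avoiding path of positive probability and length `n` spans a cylinder of positive weight
disjoint from the event of reaching `T` within `n` steps; if there is no such path, every
cylinder of length `n` avoiding `T` has weight zero. Hence that event has probability `1` exactly
when no `T`-avoiding path of length `n` exists. The σ-algebra on `S` is arbitrary, so cylinders
need not be measurable: both estimates use only subadditivity over the finitely many cylinders
of length `n`, whose weights sum to `1`.

A cycle among the `T`-avoiding reachable states can be traversed forever, giving avoiding paths
of every length. Without such a cycle an avoiding path never repeats a state, so it is shorter
than `|S|`. If `N` is the least length with no avoiding path, then extending an avoiding path of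
length `N - 1` by any edge enters `T`, and no path first entering `T` is longer than `N`.
-/

namespace MarkovChain

open Finset

variable {S : Type*}

def IsPath (P : S → S → ℝ≥0∞) (n : ℕ) (u : ℕ → S) : Prop :=
  ∀ i < n, 0 < P (u i) (u (i + 1))

def IsAvoidingPath (P : S → S → ℝ≥0∞) (s₀ : S) (T : Set S) (n : ℕ) (u : ℕ → S) : Prop :=
  u 0 = s₀ ∧ IsPath P n u ∧ ∀ i ≤ n, u i ∉ T

def avoidingReach (P : S → S → ℝ≥0∞) (s₀ : S) (T : Set S) : Set S :=
  {s | ∃ k u, IsAvoidingPath P s₀ T k u ∧ u k = s}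

def HasCycleIn (P : S → S → ℝ≥0∞) (R : Set S) : Prop :=
  ∃ (k : ℕ) (u : ℕ → S), 0 < k ∧ (∀ i ≤ k, u i ∈ R) ∧ IsPath P k u ∧ u 0 = u k

def firstHitLengths (P : S → S → ℝ≥0∞) (s₀ : S) (T : Set S) : Set ℕ :=
  {k | ∃ u : ℕ → S, u 0 = s₀ ∧ IsPath P k u ∧ (∀ i < k, u i ∉ T) ∧ u k ∈ T}

section Paths

variable {P : S → S → ℝ≥0∞} {s₀ : S} {T : Set S} {m n : ℕ} {u : ℕ → S}

theorem isPath_zero : IsPath P 0 u :=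
  fun i hi => absurd hi i.not_lt_zero

theorem IsPath.mono (hu : IsPath P n u) (hmn : m ≤ n) : IsPath P m u :=
  fun i hi => hu i (by omega)

theorem IsPath.update (hu : IsPath P n u) {t : S} (ht : 0 < P (u n) t) :
    IsPath P (n + 1) (Function.update u (n + 1) t) := by
  intro i hi
  rcases Nat.lt_succ_iff_lt_or_eq.mp hi with hi | rfl
  · simpa [Function.update_of_ne (show i ≠ n + 1 by omega),
      Function.update_of_ne (show i + 1 ≠ n + 1 by omega)] using hu i hi
  · simpa using ht

theorem IsAvoidingPath.mono (hu : IsAvoidingPath P s₀ T n u) (hmn : m ≤ n) :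
    IsAvoidingPath P s₀ T m u :=
  ⟨hu.1, hu.2.1.mono hmn, fun i hi => hu.2.2 i (by omega)⟩

theorem IsAvoidingPath.update (hu : IsAvoidingPath P s₀ T n u) {t : S} (ht : 0 < P (u n) t)
    (htT : t ∉ T) : IsAvoidingPath P s₀ T (n + 1) (Function.update u (n + 1) t) := by
  refine ⟨by simpa using hu.1, hu.2.1.update ht, fun i hi => ?_⟩
  rcases hi.lt_or_eq with hi | rfl
  · simpa [Function.update_of_ne (show i ≠ n + 1 by omega)] using hu.2.2 i (by omega)
  · simpa using htT

theorem IsAvoidingPath.mem_avoidingReach (hu : IsAvoidingPath P s₀ T n u) (hmn : m ≤ n) :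
    u m ∈ avoidingReach P s₀ T :=
  ⟨m, u, hu.mono hmn, rfl⟩

theorem notMem_of_mem_avoidingReach {s : S} (hs : s ∈ avoidingReach P s₀ T) : s ∉ T := by
  obtain ⟨k, u, hu, rfl⟩ := hs
  exact hu.2.2 k le_rfl

theorem exists_isAvoidingPath_of_hasCycleIn (hcyc : HasCycleIn P (avoidingReach P s₀ T))
    (n : ℕ) : ∃ u, IsAvoidingPath P s₀ T n u := by
  obtain ⟨k, c, hk, hcR, hc, hc0⟩ := hcyc
  have grow : ∀ m, ∃ ℓ u, ∃ i ≤ k, m ≤ ℓ ∧ IsAvoidingPath P s₀ T ℓ u ∧ u ℓ = c i := by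
    intro m
    induction m with
    | zero =>
      obtain ⟨ℓ, u, hu, hℓ⟩ := hcR 0 (Nat.zero_le k)
      exact ⟨ℓ, u, 0, Nat.zero_le k, Nat.zero_le ℓ, hu, hℓ⟩
    | succ m ih =>
      obtain ⟨ℓ, u, i, hik, hmℓ, hu, hℓ⟩ := ih
      -- walk one more step along the cycle, restarting it at `c 0 = c k`
      obtain ⟨j, hjk, hj⟩ : ∃ j < k, c j = c i := by
        rcases hik.lt_or_eq with hik | rfl
        · exact ⟨i, hik, rfl⟩
        · exact ⟨0, hk, hc0⟩
      refine ⟨ℓ + 1, Function.update u (ℓ + 1) (c (j + 1)), j + 1, hjk, by omega,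
        hu.update (by rw [hℓ, ← hj]; exact hc j hjk) ?_, by simp⟩
      exact notMem_of_mem_avoidingReach (hcR _ hjk)
  obtain ⟨ℓ, u, -, -, hnℓ, hu, -⟩ := grow n
  exact ⟨u, hu.mono hnℓ⟩

theorem IsAvoidingPath.lt_card [Fintype S] (hacyc : ¬ HasCycleIn P (avoidingReach P s₀ T))
    (hu : IsAvoidingPath P s₀ T n u) : n < Fintype.card S := by
  have hinj : ∀ a b, a < b → b ≤ n → u a ≠ u b := by
    intro a b hab hbn heq
    refine hacyc ⟨b - a, fun t => u (a + t), by omega, fun i hi => ?_, fun i hi => ?_, ?_⟩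
    · exact hu.mem_avoidingReach (by omega)
    · simpa [Nat.add_assoc] using hu.2.1 (a + i) (by omega)
    · simpa [Nat.add_sub_cancel' hab.le] using heq
  by_contra! hcard
  obtain ⟨a, b, hne, heq⟩ := Fintype.exists_ne_map_eq_of_card_lt (fun i : Fin (n + 1) => u i)
    (by simpa using Nat.lt_succ_of_le hcard)
  rcases lt_or_gt_of_ne (Fin.val_injective.ne hne) with hab | hab
  · exact hinj a b hab (by omega) heq
  · exact hinj b a hab (by omega) heq.symm

theorem exists_pos_of_sum_eq_one [Fintype S] (hP : ∀ s, ∑ t, P s t = 1) (s : S) :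
    ∃ t, 0 < P s t := by
  obtain ⟨t, -, ht⟩ := exists_ne_zero_of_sum_ne_zero ((hP s).symm ▸ one_ne_zero)
  exact ⟨t, pos_iff_ne_zero.mpr ht⟩

theorem isGreatest_firstHitLengths [Fintype S] (hP : ∀ s, ∑ t, P s t = 1)
    (hN : ¬ ∃ u, IsAvoidingPath P s₀ T n u) (hlt : ∀ m < n, ∃ u, IsAvoidingPath P s₀ T m u) :
    IsGreatest (firstHitLengths P s₀ T) n := by
  refine ⟨?_, fun k ⟨u, hu0, hu, huT, _⟩ => ?_⟩
  · cases n with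
    | zero =>
      refine ⟨fun _ => s₀, rfl, isPath_zero, fun i hi => absurd hi i.not_lt_zero, ?_⟩
      by_contra hs₀
      exact hN ⟨fun _ => s₀, rfl, isPath_zero, fun _ _ => hs₀⟩
    | succ n =>
      obtain ⟨u, hu⟩ := hlt n (Nat.lt_succ_self n)
      obtain ⟨t, ht⟩ := exists_pos_of_sum_eq_one hP (u n)
      have htT : t ∈ T := by
        by_contra htT
        exact hN ⟨_, hu.update ht htT⟩
      refine ⟨Function.update u (n + 1) t, by simpa using hu.1, hu.2.1.update ht,
        fun i hi => ?_, by simpa using htT⟩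
      simpa [Function.update_of_ne (show i ≠ n + 1 by omega)] using hu.2.2 i (by omega)
  · by_contra! hnk
    exact hN ⟨u, hu0, hu.mono hnk.le, fun i hi => huT i (by omega)⟩

end Paths

section Measure

variable {P : S → S → ℝ≥0∞} {s₀ : S} {n : ℕ}

def cylinder (n : ℕ) (u : ℕ → S) : Set (ℕ → S) :=
  {π | ∀ k ≤ n, π k = u k}

def extendFin (v : Fin (n + 1) → S) : ℕ → S :=
  fun k => v (Fin.clamp k n)

theorem extendFin_of_le (v : Fin (n + 1) → S) {k : ℕ} (hk : k ≤ n) :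
    extendFin v k = v ⟨k, Nat.lt_succ_of_le hk⟩ := by
  simp [extendFin, Fin.clamp, Nat.min_eq_left hk]

theorem mem_cylinder_extendFin (π : ℕ → S) :
    π ∈ cylinder n (extendFin fun i : Fin (n + 1) => π i) :=
  fun _ hk => (extendFin_of_le (fun i : Fin (n + 1) => π i) hk).symm

theorem measure_le_sum_cylinder [Fintype S] [MeasurableSpace S] (μ : Measure (ℕ → S))
    {Q : Set (ℕ → S)} {s : Finset (Fin (n + 1) → S)}
    (hQ : ∀ π ∈ Q, (fun i : Fin (n + 1) => π i) ∈ s) :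
    μ Q ≤ ∑ v ∈ s, μ (cylinder n (extendFin v)) :=
  (measure_mono fun π hπ => Set.mem_biUnion (hQ π hπ) (mem_cylinder_extendFin π)).trans
    (measure_biUnion_finset_le _ _)

variable [DecidableEq S]

noncomputable def pathWeight (P : S → S → ℝ≥0∞) (s₀ : S) (n : ℕ) (u : ℕ → S) : ℝ≥0∞ :=
  (if u 0 = s₀ then 1 else 0) * ∏ k ∈ range n, P (u k) (u (k + 1))

theorem pathWeight_ne_zero_iff {u : ℕ → S} :
    pathWeight P s₀ n u ≠ 0 ↔ u 0 = s₀ ∧ IsPath P n u := by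
  simp [pathWeight, IsPath, prod_ne_zero_iff, pos_iff_ne_zero]

theorem pathWeight_congr {u u' : ℕ → S} (h : ∀ k ≤ n, u k = u' k) :
    pathWeight P s₀ n u = pathWeight P s₀ n u' := by
  unfold pathWeight
  rw [h 0 n.zero_le]
  congr 1
  refine prod_congr rfl fun k hk => ?_
  have hkn := mem_range.mp hk
  rw [h k hkn.le, h (k + 1) hkn]

theorem pathWeight_succ (u : ℕ → S) :
    pathWeight P s₀ (n + 1) u = pathWeight P s₀ n u * P (u n) (u (n + 1)) := by
  simp only [pathWeight, prod_range_succ, mul_assoc]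

theorem sum_pathWeight_extendFin [Fintype S] (hP : ∀ s, ∑ t, P s t = 1) (n : ℕ) :
    ∑ v : Fin (n + 1) → S, pathWeight P s₀ n (extendFin v) = 1 := by
  induction n with
  | zero =>
    rw [← (Equiv.funUnique (Fin 1) S).symm.sum_comp]
    simp [pathWeight, extendFin]
  | succ n ih =>
    have hsnoc (w : Fin (n + 1) → S) (s : S) :
        pathWeight P s₀ (n + 1) (extendFin (Fin.snoc w s : Fin (n + 2) → S)) =
          pathWeight P s₀ n (extendFin w) * P (extendFin w n) s := by
      have hinit : ∀ k ≤ n, extendFin (Fin.snoc w s : Fin (n + 2) → S) k = extendFin w k :=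
        fun k hk => by
          rw [extendFin_of_le _ (by omega), extendFin_of_le _ hk]
          exact Fin.snoc_castSucc (α := fun _ => S) s w ⟨k, _⟩
      rw [pathWeight_succ, pathWeight_congr hinit, hinit n le_rfl,
        extendFin_of_le (n := n + 1) _ le_rfl]
      exact congrArg _ (congrArg _ (Fin.snoc_last (α := fun _ => S) s w))
    rw [← (Fin.snocEquiv fun _ => S).sum_comp, Fintype.sum_prod_type, sum_comm]
    change ∑ w, ∑ s, pathWeight P s₀ (n + 1) (extendFin (Fin.snoc w s : Fin (n + 2) → S)) = 1
    simp only [hsnoc, ← mul_sum, hP, mul_one, ih]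

end Measure

section Hitting

variable [Fintype S] [DecidableEq S] [MeasurableSpace S] {μ : Measure (ℕ → S)}
  {P : S → S → ℝ≥0∞} {s₀ : S} {T : Set S} {n : ℕ}

theorem measure_hitting_lt_one (hP : ∀ s, ∑ t, P s t = 1)
    (hcyl : ∀ u, μ (cylinder n u) = pathWeight P s₀ n u) {u : ℕ → S}
    (hu : IsAvoidingPath P s₀ T n u) : μ {π | ∃ j ≤ n, π j ∈ T} < 1 := by
  set v₀ : Fin (n + 1) → S := fun i => u i
  have hcover : ∀ π ∈ {π : ℕ → S | ∃ j ≤ n, π j ∈ T},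
      (fun i : Fin (n + 1) => π i) ∈ univ.erase v₀ := by
    rintro π ⟨j, hj, hjT⟩
    refine mem_erase.mpr ⟨fun h => hu.2.2 j hj ?_, mem_univ _⟩
    rwa [show u j = π j from (congrFun h ⟨j, Nat.lt_succ_of_le hj⟩).symm]
  have hv₀ : pathWeight P s₀ n (extendFin v₀) ≠ 0 := by
    rw [pathWeight_congr fun k hk => extendFin_of_le v₀ hk, pathWeight_ne_zero_iff]
    exact ⟨hu.1, hu.2.1⟩
  have htotal := add_sum_erase univ (fun v => pathWeight P s₀ n (extendFin v))
    (mem_univ v₀)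
  rw [sum_pathWeight_extendFin hP] at htotal
  calc μ {π | ∃ j ≤ n, π j ∈ T}
      ≤ ∑ v ∈ univ.erase v₀, pathWeight P s₀ n (extendFin v) := by
        simpa only [hcyl] using measure_le_sum_cylinder μ hcover
    _ < (∑ v ∈ univ.erase v₀, pathWeight P s₀ n (extendFin v)) +
          pathWeight P s₀ n (extendFin v₀) :=
        ENNReal.lt_add_right (ne_top_of_le_ne_top ENNReal.one_ne_top (htotal ▸ le_add_self)) hv₀
    _ = 1 := (add_comm _ _).trans htotal

theorem measure_avoiding_eq_zero (hcyl : ∀ u, μ (cylinder n u) = pathWeight P s₀ n u)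
    (hn : ¬ ∃ u, IsAvoidingPath P s₀ T n u) : μ {π | ∀ j ≤ n, π j ∉ T} = 0 := by
  classical
  have hcover : ∀ π ∈ {π : ℕ → S | ∀ j ≤ n, π j ∉ T}, (fun i : Fin (n + 1) => π i) ∈
      univ.filter fun v : Fin (n + 1) → S => ∀ i, v i ∉ T :=
    fun π hπ => mem_filter.mpr ⟨mem_univ _, fun i => hπ i (Nat.lt_succ_iff.mp i.2)⟩
  refine le_antisymm ((measure_le_sum_cylinder μ hcover).trans_eq
    (sum_eq_zero fun v hv => ?_)) zero_le
  rw [hcyl]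
  by_contra hw
  obtain ⟨h0, hpath⟩ := pathWeight_ne_zero_iff.mp hw
  exact hn ⟨extendFin v, h0, hpath, fun i hi => by
    rw [extendFin_of_le v hi]; exact (mem_filter.mp hv).2 _⟩

theorem measure_hitting_eq_one_iff [IsProbabilityMeasure μ] (hP : ∀ s, ∑ t, P s t = 1)
    (hcyl : ∀ u, μ (cylinder n u) = pathWeight P s₀ n u) :
    μ {π | ∃ j ≤ n, π j ∈ T} = 1 ↔ ¬ ∃ u, IsAvoidingPath P s₀ T n u := by
  refine ⟨fun h ⟨u, hu⟩ => (measure_hitting_lt_one hP hcyl hu).ne h, fun hn => ?_⟩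
  rw [← measure_univ (μ := μ)]
  refine measure_congr (ae_eq_univ.mpr ?_)
  simpa [Set.compl_ofPred] using measure_avoiding_eq_zero hcyl hn

end Hitting

end MarkovChain

open MarkovChain

theorem almost_sure_reachability_graph_general
    {S : Type} [Fintype S] [DecidableEq S] [MeasurableSpace S]
    (P : S → S → ℝ≥0∞) (hP : ∀ s, ∑ t, P s t = 1)
    (s₀ : S)
    (μ : Measure (ℕ → S)) (hprob : IsProbabilityMeasure μ)
    (hcyl : ∀ (n : ℕ) (u : ℕ → S),
      μ {π | ∀ k ≤ n, π k = u k} =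
        (if u 0 = s₀ then 1 else 0) * ∏ k ∈ Finset.range n, P (u k) (u (k + 1)))
    (T : Set S)
    -- the states reachable from s₀ by T-avoiding path fragments
    (R : Set S)
    (hR : R = {s | ∃ (k : ℕ) (u : ℕ → S),
      u 0 = s₀ ∧ (∀ i < k, 0 < P (u i) (u (i + 1))) ∧ (∀ i ≤ k, u i ∉ T) ∧ u k = s}) :
    -- (1)
    ((∃ (k : ℕ) (u : ℕ → S), 0 < k ∧
        (∀ i ≤ k, u i ∈ R) ∧ (∀ i < k, 0 < P (u i) (u (i + 1))) ∧ u 0 = u k) →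
      (∀ n : ℕ, μ {π | ∃ j ≤ n, π j ∈ T} < 1) ∧
        {n : ℕ | μ {π | ∃ j ≤ n, π j ∈ T} = 1} = ∅) ∧
    -- (2)
    (¬ (∃ (k : ℕ) (u : ℕ → S), 0 < k ∧
        (∀ i ≤ k, u i ∈ R) ∧ (∀ i < k, 0 < P (u i) (u (i + 1))) ∧ u 0 = u k) →
      {n : ℕ | μ {π | ∃ j ≤ n, π j ∈ T} = 1}.Nonempty ∧
        sInf {n : ℕ | μ {π | ∃ j ≤ n, π j ∈ T} = 1} =
          sSup {k : ℕ | ∃ u : ℕ → S,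
            u 0 = s₀ ∧ (∀ i < k, 0 < P (u i) (u (i + 1))) ∧
              (∀ i < k, u i ∉ T) ∧ u k ∈ T}) := by
  obtain rfl : R = avoidingReach P s₀ T := by
    simp only [hR, avoidingReach, IsAvoidingPath, IsPath, and_assoc]
  have := hprob
  have hsets : {n | μ {π | ∃ j ≤ n, π j ∈ T} = 1} = {n | ¬ ∃ u, IsAvoidingPath P s₀ T n u} :=
    Set.ext fun n => measure_hitting_eq_one_iff hP (hcyl n)
  rw [hsets]
  refine ⟨fun hcyc => ?_, fun hacyc => ?_⟩
  · have havoid := exists_isAvoidingPath_of_hasCycleIn hcyc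
    exact ⟨fun n => (havoid n).elim fun _ hu => measure_hitting_lt_one hP (hcyl n) hu,
      Set.eq_empty_of_forall_notMem fun n hn => hn (havoid n)⟩
  · have hne : {n | ¬ ∃ u, IsAvoidingPath P s₀ T n u}.Nonempty :=
      ⟨Fintype.card S, fun ⟨_, hu⟩ => (hu.lt_card hacyc).false⟩
    exact ⟨hne, (isGreatest_firstHitLengths hP (Nat.sInf_mem hne)
      fun m hm => not_not.mp (Nat.notMem_of_lt_sInf hm)).csSup_eq.symm⟩

/-- For a finite Markov chain `M = (S,P,s₀,L)`, `T = {s | a ∈ L s}`, and `R` the set of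
states reachable from `s₀` by `T`-avoiding path fragments:
(1) if there is a directed cycle inside `R`, then the probability of reaching `T` within `n`
steps is `< 1` for every `n`, i.e. `V_{=1}(◇_{≤x} a) = ∅`;
(2) otherwise `V_{=1}(◇_{≤x} a) ≠ ∅` and its minimum equals the length of a longest path
fragment from `s₀` to `T` whose states before the last one avoid `T`. -/
theorem almost_sure_reachability_graph
    {AP S : Type} [Fintype S] [DecidableEq S] [MeasurableSpace S]
    (P : S → S → ℝ≥0∞) (hP : ∀ s, ∑ t, P s t = 1)
    (s₀ : S) (L : S → Set AP) (a : AP)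
    (μ : Measure (ℕ → S)) (hprob : IsProbabilityMeasure μ)
    (hcyl : ∀ (n : ℕ) (u : ℕ → S),
      μ {π | ∀ k ≤ n, π k = u k} =
        (if u 0 = s₀ then 1 else 0) * ∏ k ∈ Finset.range n, P (u k) (u (k + 1)))
    (T : Set S) (hT : T = {s | a ∈ L s})
    -- the states reachable from s₀ by T-avoiding path fragments
    (R : Set S)
    (hR : R = {s | ∃ (k : ℕ) (u : ℕ → S),
      u 0 = s₀ ∧ (∀ i < k, 0 < P (u i) (u (i + 1))) ∧ (∀ i ≤ k, u i ∉ T) ∧ u k = s}) :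
    -- (1)
    ((∃ (k : ℕ) (u : ℕ → S), 0 < k ∧
        (∀ i ≤ k, u i ∈ R) ∧ (∀ i < k, 0 < P (u i) (u (i + 1))) ∧ u 0 = u k) →
      (∀ n : ℕ, μ {π | ∃ j ≤ n, π j ∈ T} < 1) ∧
        {n : ℕ | μ {π | ∃ j ≤ n, π j ∈ T} = 1} = ∅) ∧
    -- (2)
    (¬ (∃ (k : ℕ) (u : ℕ → S), 0 < k ∧
        (∀ i ≤ k, u i ∈ R) ∧ (∀ i < k, 0 < P (u i) (u (i + 1))) ∧ u 0 = u k) →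
      {n : ℕ | μ {π | ∃ j ≤ n, π j ∈ T} = 1}.Nonempty ∧
        sInf {n : ℕ | μ {π | ∃ j ≤ n, π j ∈ T} = 1} =
          sSup {k : ℕ | ∃ u : ℕ → S,
            u 0 = s₀ ∧ (∀ i < k, 0 < P (u i) (u (i + 1))) ∧
              (∀ i < k, u i ∉ T) ∧ u k ∈ T}) :=
  almost_sure_reachability_graph_general P hP s₀ μ hprob hcyl T R hR
end

section
/- For every pLTL(F,X) formula φ and finite Markov chain M with m states: V_{>0}(φ) ≠ ∅ if and only if v̄ ∈ V_{>0}(φ), where v̄ is the valuation assigning v̄(x) = m·|φ| to every parameter variable x of φ. -/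
open MeasureTheory
open scoped ENNReal

/-- Syntax of the fragment pLTL(F,X):
φ ::= a | ¬a | φ∧φ | φ∨φ | ○φ | ◇φ | ◇_{≤x}φ | ◇_{≤c}φ. -/
inductive FX (AP Var : Type) : Type
  | atom : AP → FX AP Var
  | natom : AP → FX AP Var
  | and : FX AP Var → FX AP Var → FX AP Var
  | or : FX AP Var → FX AP Var → FX AP Var
  | next : FX AP Var → FX AP Var
  | ev : FX AP Var → FX AP Var
  | evVar : Var → FX AP Var → FX AP Var
  | evConst : ℕ → FX AP Var → FX AP Var

/-- The size `|φ|` of a formula: the number of subformula occurrences. -/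
def FX.size {AP Var : Type} : FX AP Var → ℕ
  | atom _ => 1
  | natom _ => 1
  | and φ ψ => FX.size φ + FX.size ψ + 1
  | or φ ψ => FX.size φ + FX.size ψ + 1
  | next φ => FX.size φ + 1
  | ev φ => FX.size φ + 1
  | evVar _ φ => FX.size φ + 1
  | evConst _ φ => FX.size φ + 1

/-- Satisfaction relation `(w,i,v) ⊨ φ` for pLTL(F,X). -/
def FX.Sat {AP Var : Type} (w : ℕ → Set AP) : ℕ → (Var → ℕ) → FX AP Var → Prop
  | i, _, atom a => a ∈ w i
  | i, _, natom a => a ∉ w i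
  | i, v, and φ ψ => FX.Sat w i v φ ∧ FX.Sat w i v ψ
  | i, v, or φ ψ => FX.Sat w i v φ ∨ FX.Sat w i v ψ
  | i, v, next φ => FX.Sat w (i + 1) v φ
  | i, v, ev φ => ∃ j, i ≤ j ∧ FX.Sat w j v φ
  | i, v, evVar x φ => ∃ j, i ≤ j ∧ j ≤ v x + i ∧ FX.Sat w j v φ
  | i, v, evConst c φ => ∃ j, i ≤ j ∧ j ≤ c + i ∧ FX.Sat w j v φ


/-- Satisfaction where all evaluation positions lie in a finite set `C`. -/
def FX.SatSet {AP Var : Type} (w : ℕ → Set AP) : ℕ → Finset ℕ → FX AP Var → Prop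
  | i, _, atom a => a ∈ w i
  | i, _, natom a => a ∉ w i
  | i, C, and φ ψ => FX.SatSet w i C φ ∧ FX.SatSet w i C ψ
  | i, C, or φ ψ => FX.SatSet w i C φ ∨ FX.SatSet w i C ψ
  | i, C, next φ => (i + 1) ∈ C ∧ FX.SatSet w (i + 1) C φ
  | i, C, ev φ => ∃ j ∈ C, i ≤ j ∧ FX.SatSet w j C φ
  | i, C, evVar _ φ => ∃ j ∈ C, i ≤ j ∧ FX.SatSet w j C φ
  | i, C, evConst c φ => ∃ j ∈ C, i ≤ j ∧ j ≤ c + i ∧ FX.SatSet w j C φ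

lemma FX.SatSet.mono {AP Var : Type} {w : ℕ → Set AP} {C C' : Finset ℕ} (hCC : C ⊆ C') :
    ∀ (φ : FX AP Var) (i : ℕ), FX.SatSet w i C φ → FX.SatSet w i C' φ := by
  intro φ
  induction φ with
  | atom a => intro i h; exact h
  | natom a => intro i h; exact h
  | and φ ψ ih1 ih2 => intro i h; exact ⟨ih1 i h.1, ih2 i h.2⟩
  | or φ ψ ih1 ih2 =>
      intro i h
      exact h.elim (fun h => Or.inl (ih1 i h)) (fun h => Or.inr (ih2 i h))
  | next φ ih => intro i h; exact ⟨hCC h.1, ih _ h.2⟩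
  | ev φ ih =>
      rintro i ⟨j, hj, hij, h⟩; exact ⟨j, hCC hj, hij, ih j h⟩
  | evVar x φ ih =>
      rintro i ⟨j, hj, hij, h⟩; exact ⟨j, hCC hj, hij, ih j h⟩
  | evConst c φ ih =>
      rintro i ⟨j, hj, hij, hjc, h⟩; exact ⟨j, hCC hj, hij, hjc, ih j h⟩

/-- Extraction of a small witness set from a satisfaction. -/
lemma FX.sat_to_satSet {AP Var : Type} {w : ℕ → Set AP} {v : Var → ℕ} :
    ∀ (φ : FX AP Var) (i : ℕ), FX.Sat w i v φ →
      ∃ C : Finset ℕ, i ∈ C ∧ C.card ≤ φ.size ∧ FX.SatSet w i C φ := by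
  intro φ
  induction φ with
  | atom a => intro i h; exact ⟨{i}, Finset.mem_singleton_self i, by simp [FX.size], h⟩
  | natom a => intro i h; exact ⟨{i}, Finset.mem_singleton_self i, by simp [FX.size], h⟩
  | and φ ψ ih1 ih2 =>
      rintro i ⟨h1, h2⟩
      obtain ⟨C1, hi1, hc1, hs1⟩ := ih1 i h1
      obtain ⟨C2, hi2, hc2, hs2⟩ := ih2 i h2
      refine ⟨C1 ∪ C2, Finset.mem_union_left _ hi1, ?_, ?_, ?_⟩
      · calc (C1 ∪ C2).card ≤ C1.card + C2.card := Finset.card_union_le _ _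
          _ ≤ φ.size + ψ.size + 1 := by omega
      · exact FX.SatSet.mono Finset.subset_union_left _ _ hs1
      · exact FX.SatSet.mono Finset.subset_union_right _ _ hs2
  | or φ ψ ih1 ih2 =>
      rintro i (h | h)
      · obtain ⟨C, hi, hc, hs⟩ := ih1 i h
        exact ⟨C, hi, by simp [FX.size]; omega, Or.inl hs⟩
      · obtain ⟨C, hi, hc, hs⟩ := ih2 i h
        exact ⟨C, hi, by simp [FX.size]; omega, Or.inr hs⟩
  | next φ ih =>
      intro i h
      obtain ⟨C, hi, hc, hs⟩ := ih (i + 1) h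
      refine ⟨insert i C, Finset.mem_insert_self i C, ?_,
        Finset.mem_insert_of_mem hi, FX.SatSet.mono (Finset.subset_insert i C) _ _ hs⟩
      calc (insert i C).card ≤ C.card + 1 := Finset.card_insert_le _ _
        _ ≤ φ.size + 1 := by omega
  | ev φ ih =>
      rintro i ⟨j, hij, h⟩
      obtain ⟨C, hj, hc, hs⟩ := ih j h
      refine ⟨insert i C, Finset.mem_insert_self i C, ?_,
        j, Finset.mem_insert_of_mem hj, hij, FX.SatSet.mono (Finset.subset_insert i C) _ _ hs⟩
      calc (insert i C).card ≤ C.card + 1 := Finset.card_insert_le _ _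
        _ ≤ φ.size + 1 := by omega
  | evVar x φ ih =>
      rintro i ⟨j, hij, _, h⟩
      obtain ⟨C, hj, hc, hs⟩ := ih j h
      refine ⟨insert i C, Finset.mem_insert_self i C, ?_,
        j, Finset.mem_insert_of_mem hj, hij, FX.SatSet.mono (Finset.subset_insert i C) _ _ hs⟩
      calc (insert i C).card ≤ C.card + 1 := Finset.card_insert_le _ _
        _ ≤ φ.size + 1 := by omega
  | evConst c φ ih =>
      rintro i ⟨j, hij, hjc, h⟩
      obtain ⟨C, hj, hc, hs⟩ := ih j h
      refine ⟨insert i C, Finset.mem_insert_self i C, ?_,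
        j, Finset.mem_insert_of_mem hj, hij, hjc, FX.SatSet.mono (Finset.subset_insert i C) _ _ hs⟩
      calc (insert i C).card ≤ C.card + 1 := Finset.card_insert_le _ _
        _ ≤ φ.size + 1 := by omega

/-- Transfer of `SatSet` along a contraction `g`. -/
lemma FX.satSet_transfer {AP Var : Type} {w w' : ℕ → Set AP} {C : Finset ℕ} {g : ℕ → ℕ}
    (hw : ∀ j ∈ C, w' (g j) = w j)
    (hmono : ∀ i ∈ C, ∀ j ∈ C, i < j → g i < g j)
    (hcontr : ∀ i ∈ C, ∀ j ∈ C, i ≤ j → g j + i ≤ g i + j) :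
    ∀ (φ : FX AP Var) (i : ℕ), i ∈ C → FX.SatSet w i C φ →
      FX.SatSet w' (g i) (C.image g) φ := by
  have hmono' : ∀ i ∈ C, ∀ j ∈ C, i ≤ j → g i ≤ g j := by
    intro i hi j hj hij
    rcases lt_or_eq_of_le hij with h | h
    · exact le_of_lt (hmono i hi j hj h)
    · subst h; exact le_rfl
  intro φ
  induction φ with
  | atom a => intro i hi h; simpa [FX.SatSet, hw i hi] using h
  | natom a => intro i hi h; simpa [FX.SatSet, hw i hi] using h
  | and φ ψ ih1 ih2 => intro i hi h; exact ⟨ih1 i hi h.1, ih2 i hi h.2⟩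
  | or φ ψ ih1 ih2 =>
      intro i hi h
      exact h.elim (fun h => Or.inl (ih1 i hi h)) (fun h => Or.inr (ih2 i hi h))
  | next φ ih =>
      rintro i hi ⟨hi1, h⟩
      have hgi1 : g (i + 1) = g i + 1 := by
        have h1 := hmono i hi (i + 1) hi1 (Nat.lt_succ_self i)
        have h2 := hcontr i hi (i + 1) hi1 (Nat.le_succ i)
        omega
      refine ⟨?_, ?_⟩
      · rw [← hgi1]; exact Finset.mem_image_of_mem g hi1
      · rw [← hgi1]; exact ih (i + 1) hi1 h
  | ev φ ih =>
      rintro i hi ⟨j, hj, hij, h⟩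
      exact ⟨g j, Finset.mem_image_of_mem g hj, hmono' i hi j hj hij, ih j hj h⟩
  | evVar x φ ih =>
      rintro i hi ⟨j, hj, hij, h⟩
      exact ⟨g j, Finset.mem_image_of_mem g hj, hmono' i hi j hj hij, ih j hj h⟩
  | evConst c φ ih =>
      rintro i hi ⟨j, hj, hij, hjc, h⟩
      refine ⟨g j, Finset.mem_image_of_mem g hj, hmono' i hi j hj hij, ?_, ih j hj h⟩
      have := hcontr i hi j hj hij
      omega

lemma FX.satSet_to_sat {AP Var : Type} {w : ℕ → Set AP} {C : Finset ℕ} {B : ℕ}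
    (hB : ∀ j ∈ C, j ≤ B) :
    ∀ (φ : FX AP Var) (i : ℕ), FX.SatSet w i C φ → FX.Sat w i (fun _ => B) φ := by
  intro φ
  induction φ with
  | atom a => intro i h; exact h
  | natom a => intro i h; exact h
  | and φ ψ ih1 ih2 => intro i h; exact ⟨ih1 i h.1, ih2 i h.2⟩
  | or φ ψ ih1 ih2 =>
      intro i h
      exact h.elim (fun h => Or.inl (ih1 i h)) (fun h => Or.inr (ih2 i h))
  | next φ ih => intro i h; exact ih _ h.2
  | ev φ ih => rintro i ⟨j, hj, hij, h⟩; exact ⟨j, hij, ih j h⟩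
  | evVar x φ ih =>
      rintro i ⟨j, hj, hij, h⟩
      exact ⟨j, hij, le_trans (hB j hj) (Nat.le_add_right B i), ih j h⟩
  | evConst c φ ih =>
      rintro i ⟨j, hj, hij, hjc, h⟩
      exact ⟨j, hij, hjc, ih j h⟩

/-- Co-safety: satisfaction only depends on a finite prefix. -/
lemma FX.sat_prefix {AP Var : Type} {w : ℕ → Set AP} {v : Var → ℕ} :
    ∀ (φ : FX AP Var) (i : ℕ), FX.Sat w i v φ →
      ∃ n, ∀ w' : ℕ → Set AP, (∀ k ≤ n, w' k = w k) → FX.Sat w' i v φ := by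
  intro φ
  induction φ with
  | atom a => intro i h
              exact ⟨i, fun w' hw' => by
                show a ∈ w' i; rw [hw' i le_rfl]; exact h⟩
  | natom a => intro i h
               exact ⟨i, fun w' hw' => by
                show a ∉ w' i; rw [hw' i le_rfl]; exact h⟩
  | and φ ψ ih1 ih2 =>
      rintro i ⟨h1, h2⟩
      obtain ⟨n1, hn1⟩ := ih1 i h1
      obtain ⟨n2, hn2⟩ := ih2 i h2
      exact ⟨max n1 n2, fun w' hw' =>
        ⟨hn1 w' (fun k hk => hw' k (le_trans hk (le_max_left _ _))),
         hn2 w' (fun k hk => hw' k (le_trans hk (le_max_right _ _)))⟩⟩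
  | or φ ψ ih1 ih2 =>
      rintro i (h | h)
      · obtain ⟨n, hn⟩ := ih1 i h; exact ⟨n, fun w' hw' => Or.inl (hn w' hw')⟩
      · obtain ⟨n, hn⟩ := ih2 i h; exact ⟨n, fun w' hw' => Or.inr (hn w' hw')⟩
  | next φ ih =>
      intro i h
      obtain ⟨n, hn⟩ := ih (i + 1) h
      exact ⟨n, fun w' hw' => hn w' hw'⟩
  | ev φ ih =>
      rintro i ⟨j, hij, h⟩
      obtain ⟨n, hn⟩ := ih j h
      exact ⟨n, fun w' hw' => ⟨j, hij, hn w' hw'⟩⟩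
  | evVar x φ ih =>
      rintro i ⟨j, hij, hjx, h⟩
      obtain ⟨n, hn⟩ := ih j h
      exact ⟨n, fun w' hw' => ⟨j, hij, hjx, hn w' hw'⟩⟩
  | evConst c φ ih =>
      rintro i ⟨j, hij, hjc, h⟩
      obtain ⟨n, hn⟩ := ih j h
      exact ⟨n, fun w' hw' => ⟨j, hij, hjc, hn w' hw'⟩⟩

/-- Contraction of a path segment: any valid segment of length `ℓ ≥ 1` can be
replaced by one of length `d` with `1 ≤ d ≤ min ℓ (card S)`. -/
lemma seg_contract {S : Type} [Fintype S] (P : S → S → ℝ≥0∞) :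
    ∀ (ℓ : ℕ), 1 ≤ ℓ → ∀ (π : ℕ → S), (∀ n < ℓ, P (π n) (π (n + 1)) ≠ 0) →
      ∃ (d : ℕ) (τ : ℕ → S), 1 ≤ d ∧ d ≤ ℓ ∧ d ≤ Fintype.card S ∧
        τ 0 = π 0 ∧ τ d = π ℓ ∧ ∀ n < d, P (τ n) (τ (n + 1)) ≠ 0 := by
  intro ℓ
  induction ℓ using Nat.strong_induction_on with
  | _ ℓ IH =>
    intro hℓ π hπ
    set m := Fintype.card S with hm
    by_cases hlm : ℓ ≤ m
    · exact ⟨ℓ, π, hℓ, le_rfl, hlm, rfl, rfl, hπ⟩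
    · push_neg at hlm
      -- pigeonhole on π 0, …, π m
      have hninj : ¬ Function.Injective (fun i : Fin (m + 1) => π i) := by
        intro hinj
        have := Fintype.card_le_of_injective _ hinj
        simp [hm] at this
      obtain ⟨i, j, hij, hne⟩ := Function.not_injective_iff.mp hninj
      -- wlog i < j
      obtain ⟨p, q, hpq, hqm, hpqeq⟩ :
          ∃ p q : ℕ, p < q ∧ q ≤ m ∧ π p = π q := by
        rcases lt_or_gt_of_ne (fun h => hne (Fin.ext h)) with h | h
        · exact ⟨i, j, h, Nat.lt_succ_iff.mp j.isLt, hij⟩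
        · exact ⟨j, i, h, Nat.lt_succ_iff.mp i.isLt, hij.symm⟩
      set π' : ℕ → S := fun n => if n < p then π n else π (n + (q - p)) with hπ'
      have hlt : ∀ n, n < p → π' n = π n := by
        intro n h; simp only [hπ']; rw [if_pos h]
      have hgee : ∀ n, ¬ n < p → π' n = π (n + (q - p)) := by
        intro n h; simp only [hπ']; rw [if_neg h]
      set ℓ' := ℓ - (q - p) with hℓ'
      have hℓ'lt : ℓ' < ℓ := by omega
      have hℓ'1 : 1 ≤ ℓ' := by omega
      have hvalid : ∀ n < ℓ', P (π' n) (π' (n + 1)) ≠ 0 := by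
        intro n hn
        rcases lt_trichotomy (n + 1) p with h | h | h
        · rw [hlt n (by omega), hlt (n + 1) h]
          exact hπ n (by omega)
        · rw [hlt n (by omega), hgee (n + 1) (by omega),
            show n + 1 + (q - p) = q by omega, ← hpqeq, ← h]
          exact hπ n (by omega)
        · rw [hgee n (by omega), hgee (n + 1) (by omega),
            show n + 1 + (q - p) = n + (q - p) + 1 by omega]
          exact hπ (n + (q - p)) (by omega)
      have h0 : π' 0 = π 0 := by
        by_cases h : 0 < p
        · exact hlt 0 h
        · rw [hgee 0 h, show 0 + (q - p) = q by omega, ← hpqeq,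
            show p = 0 by omega]
      have hend : π' ℓ' = π ℓ := by
        rw [hgee ℓ' (by omega)]
        congr 1
        omega
      obtain ⟨d, τ, hd1, hdℓ, hdm, hτ0, hτd, hτv⟩ := IH ℓ' hℓ'lt hℓ'1 π' hvalid
      exact ⟨d, τ, hd1, by omega, hdm, hτ0.trans h0, hτd.trans hend, hτv⟩

/-- Contracting a path so that all checkpoints in `C` occur within `card S * (|C| - 1)` steps. -/
lemma path_contract {S : Type} [Fintype S] (P : S → S → ℝ≥0∞) :
    ∀ (k : ℕ) (C : Finset ℕ), C.card = k + 1 → 0 ∈ C →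
    ∀ (π : ℕ → S), (∀ n, P (π n) (π (n + 1)) ≠ 0) →
      ∃ (σ : ℕ → S) (g : ℕ → ℕ),
        (∀ n, P (σ n) (σ (n + 1)) ≠ 0) ∧ g 0 = 0 ∧
        (∀ j ∈ C, σ (g j) = π j) ∧
        (∀ i ∈ C, ∀ j ∈ C, i < j → g i < g j) ∧
        (∀ i ∈ C, ∀ j ∈ C, i ≤ j → g j + i ≤ g i + j) ∧
        (∀ j ∈ C, g j ≤ Fintype.card S * k) := by
  intro k
  induction k with
  | zero =>
    intro C hcard h0 π hπ
    have hC : C = {0} := by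
      obtain ⟨a, ha⟩ := Finset.card_eq_one.mp hcard
      rw [ha] at h0 ⊢
      simp at h0
      rw [h0]
    subst hC
    refine ⟨π, id, hπ, rfl, ?_, ?_, ?_, ?_⟩ <;> intros <;> simp_all
  | succ k IH =>
    intro C hcard h0 π hπ
    have hne : (C.erase 0).Nonempty := by
      rw [← Finset.card_pos, Finset.card_erase_of_mem h0, hcard]; omega
    set c₁ := (C.erase 0).min' hne with hc₁
    have hc₁mem : c₁ ∈ C.erase 0 := Finset.min'_mem _ _
    have hc₁pos : 1 ≤ c₁ := by
      have := (Finset.mem_erase.mp hc₁mem).1; omega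
    have hc₁le : ∀ j ∈ C.erase 0, c₁ ≤ j := fun j hj => Finset.min'_le _ j hj
    -- contract the initial segment [0, c₁]
    obtain ⟨d, τ, hd1, hdc, hdm, hτ0, hτd, hτv⟩ :=
      seg_contract P c₁ hc₁pos π (fun n _ => hπ n)
    -- recursive structure on the shifted path and checkpoint set
    set π' : ℕ → S := fun n => π (n + c₁) with hπ'
    set C' : Finset ℕ := (C.erase 0).image (fun j => j - c₁) with hC'
    have hinj : Set.InjOn (fun j => j - c₁) (C.erase 0) := by
      intro a ha b hb hab
      have := hc₁le a ha; have := hc₁le b hb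
      simp only at hab; omega
    have hcard' : C'.card = k + 1 := by
      rw [hC', Finset.card_image_of_injOn hinj, Finset.card_erase_of_mem h0, hcard]
      omega
    have h0' : 0 ∈ C' := by
      rw [hC']
      exact Finset.mem_image.mpr ⟨c₁, hc₁mem, by omega⟩
    have hπ'v : ∀ n, P (π' n) (π' (n + 1)) ≠ 0 := by
      intro n
      simp only [hπ']
      rw [show n + 1 + c₁ = n + c₁ + 1 by omega]
      exact hπ (n + c₁)
    obtain ⟨σ', g', hσ'v, hg'0, hσ'g, hmono', hcontr', hbd'⟩ := IH C' hcard' h0' π' hπ'v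
    have hσ'0 : σ' 0 = π c₁ := by
      have := hσ'g 0 h0'
      rw [hg'0] at this
      simpa [hπ'] using this
    set σ : ℕ → S := fun n => if n < d then τ n else σ' (n - d) with hσ
    set g : ℕ → ℕ := fun j => if j = 0 then 0 else g' (j - c₁) + d with hg
    have hmem' : ∀ j ∈ C, j ≠ 0 → (j - c₁) ∈ C' := by
      intro j hj hj0
      exact Finset.mem_image.mpr ⟨j, Finset.mem_erase.mpr ⟨hj0, hj⟩, rfl⟩
    have hge : ∀ j ∈ C, j ≠ 0 → c₁ ≤ j := by
      intro j hj hj0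
      exact hc₁le j (Finset.mem_erase.mpr ⟨hj0, hj⟩)
    refine ⟨σ, g, ?_, by simp [hg], ?_, ?_, ?_, ?_⟩
    · -- valid steps
      intro n
      by_cases h : n + 1 < d
      · simp only [hσ, if_pos h, if_pos (by omega : n < d)]
        exact hτv n (by omega)
      · by_cases h' : n + 1 = d
        · have : σ (n + 1) = τ d := by
            simp only [hσ, if_neg (by omega : ¬ n + 1 < d)]
            rw [h', Nat.sub_self, hσ'0, ← hτd]
          rw [this]
          simp only [hσ, if_pos (by omega : n < d)]
          rw [← h']
          exact hτv n (by omega)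
        · have hnd : ¬ n < d := by omega
          simp only [hσ, if_neg hnd, if_neg (by omega : ¬ n + 1 < d)]
          rw [show n + 1 - d = (n - d) + 1 by omega]
          exact hσ'v (n - d)
    · -- σ (g j) = π j
      intro j hj
      by_cases hj0 : j = 0
      · subst hj0
        simp only [hg, if_pos rfl, hσ, if_pos (by omega : 0 < d)]
        exact hτ0
      · simp only [hg, if_neg hj0, hσ, if_neg (by omega : ¬ g' (j - c₁) + d < d)]
        rw [Nat.add_sub_cancel]
        rw [hσ'g (j - c₁) (hmem' j hj hj0)]
        simp only [hπ']
        congr 1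
        have := hge j hj hj0
        omega
    · -- strict mono
      intro i hi j hj hij
      by_cases hi0 : i = 0
      · subst hi0
        have hj0 : j ≠ 0 := by omega
        simp only [hg, if_pos rfl, if_neg hj0]
        omega
      · have hj0 : j ≠ 0 := by omega
        simp only [hg, if_neg hi0, if_neg hj0]
        have := hmono' (i - c₁) (hmem' i hi hi0) (j - c₁) (hmem' j hj hj0)
          (by have := hge i hi hi0; omega)
        omega
    · -- contracting
      intro i hi j hj hij
      by_cases hi0 : i = 0
      · subst hi0
        by_cases hj0 : j = 0
        · simp [hg, hj0]
        · simp only [hg, if_pos rfl, if_neg hj0]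
          have h1 := hcontr' 0 h0' (j - c₁) (hmem' j hj hj0) (Nat.zero_le _)
          rw [hg'0] at h1
          have := hge j hj hj0
          omega
      · have hj0 : j ≠ 0 := by omega
        simp only [hg, if_neg hi0, if_neg hj0]
        have h1 := hcontr' (i - c₁) (hmem' i hi hi0) (j - c₁) (hmem' j hj hj0)
          (by omega)
        have := hge i hi hi0
        have := hge j hj hj0
        omega
    · -- bound
      intro j hj
      by_cases hj0 : j = 0
      · simp [hg, hj0]
      · simp only [hg, if_neg hj0]
        have h1 := hbd' (j - c₁) (hmem' j hj hj0)
        have : d ≤ Fintype.card S := hdm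
        calc g' (j - c₁) + d ≤ Fintype.card S * k + Fintype.card S := by omega
          _ = Fintype.card S * (k + 1) := by ring

section Meas
variable {S : Type} [Fintype S] [DecidableEq S] [MeasurableSpace S]
  (P : S → S → ℝ≥0∞) (s₀ : S) (μ : Measure (ℕ → S))
  (hcyl : ∀ (n : ℕ) (u : ℕ → S),
      μ {π | ∀ k ≤ n, π k = u k} =
        (if u 0 = s₀ then 1 else 0) * ∏ k ∈ Finset.range n, P (u k) (u (k + 1)))

include hcyl

lemma null_start : μ {π : ℕ → S | π 0 ≠ s₀} = 0 := by
  have hsub : {π : ℕ → S | π 0 ≠ s₀} ⊆ ⋃ (a : S), ⋃ (_ : a ≠ s₀), {π : ℕ → S | ∀ k ≤ 0, π k = a} := by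
    intro π hπ
    refine Set.mem_iUnion.mpr ⟨π 0, Set.mem_iUnion.mpr ⟨hπ, ?_⟩⟩
    intro k hk
    rw [Nat.le_zero.mp hk]
  refine measure_mono_null hsub (measure_iUnion_null fun a => measure_iUnion_null fun ha => ?_)
  have := hcyl 0 (fun _ => a)
  simpa [ha] using this

lemma null_badstep (k : ℕ) (a b : S) (hab : P a b = 0) :
    μ {π : ℕ → S | π k = a ∧ π (k + 1) = b} = 0 := by
  classical
  set e : (Fin (k + 2) → S) → (ℕ → S) := fun u n => if h : n < k + 2 then u ⟨n, h⟩ else a with he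
  have hsub : {π : ℕ → S | π k = a ∧ π (k + 1) = b} ⊆
      ⋃ (u : Fin (k + 2) → S),
        ⋃ (_ : e u k = a ∧ e u (k + 1) = b), {π : ℕ → S | ∀ j ≤ k + 1, π j = e u j} := by
    rintro π ⟨h1, h2⟩
    refine Set.mem_iUnion.mpr ⟨fun i => π i, ?_⟩
    have heπ : ∀ j, j ≤ k + 1 → e (fun i : Fin (k + 2) => π i) j = π j := by
      intro j hj
      simp only [he]
      rw [dif_pos (by omega : j < k + 2)]
    refine Set.mem_iUnion.mpr ⟨⟨by rw [heπ k (by omega)]; exact h1,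
      by rw [heπ (k + 1) (by omega)]; exact h2⟩, ?_⟩
    intro j hj
    exact (heπ j hj).symm
  refine measure_mono_null hsub (measure_iUnion_null fun u => measure_iUnion_null fun hu => ?_)
  rw [hcyl (k + 1) (e u)]
  have : ∏ j ∈ Finset.range (k + 1), P (e u j) (e u (j + 1)) = 0 := by
    refine Finset.prod_eq_zero (Finset.self_mem_range_succ k) ?_
    rw [hu.1, hu.2]
    exact hab
  rw [this, mul_zero]

/-- From positive probability to an actual satisfying path. -/
lemma exists_path_of_pos (E : Set (ℕ → S)) (hE : 0 < μ E) :
    ∃ π ∈ E, π 0 = s₀ ∧ ∀ n, P (π n) (π (n + 1)) ≠ 0 := by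
  classical
  set Bad : Set (ℕ → S) :=
    {π | π 0 ≠ s₀} ∪
      ⋃ (n : ℕ), ⋃ (a : S), ⋃ (b : S), ⋃ (_ : P a b = 0),
        {π : ℕ → S | π n = a ∧ π (n + 1) = b} with hBad
  have hBadNull : μ Bad = 0 := by
    refine measure_union_null (null_start P s₀ μ hcyl) ?_
    exact measure_iUnion_null fun n => measure_iUnion_null fun a =>
      measure_iUnion_null fun b => measure_iUnion_null fun hab =>
        null_badstep P s₀ μ hcyl n a b hab
  by_contra hcon
  push_neg at hcon
  have hsub : E ⊆ Bad := by
    intro π hπ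
    by_cases h0 : π 0 = s₀
    · obtain ⟨n, hn⟩ : ∃ n, P (π n) (π (n + 1)) = 0 := hcon π hπ h0
      refine Or.inr ?_
      refine Set.mem_iUnion.mpr ⟨n, Set.mem_iUnion.mpr ⟨π n, Set.mem_iUnion.mpr ⟨π (n + 1),
        Set.mem_iUnion.mpr ⟨hn, ⟨rfl, rfl⟩⟩⟩⟩⟩
    · exact Or.inl h0
  exact absurd (measure_mono_null hsub hBadNull) (by exact fun h => by simp [h] at hE)

/-- From a satisfying path through a cylinder to positive probability. -/
lemma pos_of_cylinder (E : Set (ℕ → S)) (π : ℕ → S) (n : ℕ)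
    (h0 : π 0 = s₀) (hstep : ∀ k, P (π k) (π (k + 1)) ≠ 0)
    (hsub : {π' : ℕ → S | ∀ k ≤ n, π' k = π k} ⊆ E) : 0 < μ E := by
  refine lt_of_lt_of_le ?_ (measure_mono hsub)
  rw [pos_iff_ne_zero, hcyl n π, if_pos h0, one_mul]
  exact Finset.prod_ne_zero_iff.mpr fun k _ => hstep k

end Meas
/-- For a pLTL(F,X) formula `φ` and finite Markov chain `M` with `m` states:
`V_{>0}(φ) ≠ ∅` iff `v̄ ∈ V_{>0}(φ)`, where `v̄(x) = m·|φ|` for every variable `x`. -/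
theorem FX_Vpos_nonempty_iff_bound
    {AP Var S : Type} [Fintype S] [DecidableEq S] [MeasurableSpace S]
    (P : S → S → ℝ≥0∞) (hP : ∀ s, ∑ t, P s t = 1)
    (s₀ : S) (L : S → Set AP)
    (μ : Measure (ℕ → S)) (hprob : IsProbabilityMeasure μ)
    (hcyl : ∀ (n : ℕ) (u : ℕ → S),
      μ {π | ∀ k ≤ n, π k = u k} =
        (if u 0 = s₀ then 1 else 0) * ∏ k ∈ Finset.range n, P (u k) (u (k + 1)))
    (φ : FX AP Var)
    (V : Set (Var → ℕ))
    (hV : V = {v | 0 < μ {π | FX.Sat (fun i => L (π i)) 0 v φ}}) :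
    V.Nonempty ↔ (fun _ : Var => Fintype.card S * φ.size) ∈ V := by
  constructor
  · rintro ⟨v, hv⟩
    rw [hV] at hv ⊢
    simp only [Set.mem_setOf_eq] at hv ⊢
    obtain ⟨π, hπE, hπ0, hπstep⟩ := exists_path_of_pos P s₀ μ hcyl _ hv
    have hπSat : FX.Sat (fun i => L (π i)) 0 v φ := hπE
    obtain ⟨C, h0C, hcard, hSS⟩ := FX.sat_to_satSet φ 0 hπSat
    have hcard1 : 1 ≤ C.card := Finset.card_pos.mpr ⟨0, h0C⟩
    obtain ⟨σ, g, hσstep, hg0, hσg, hmono, hcontr, hbd⟩ :=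
      path_contract P (C.card - 1) C (by omega) h0C π hπstep
    have htrans := FX.satSet_transfer (w := fun i => L (π i)) (w' := fun i => L (σ i))
      (C := C) (g := g) (fun j hj => by show L (σ (g j)) = L (π j); rw [hσg j hj]) hmono hcontr φ 0 h0C hSS
    rw [hg0] at htrans
    have hB : ∀ j ∈ C.image g, j ≤ Fintype.card S * φ.size := by
      intro j hj
      obtain ⟨j0, hj0, rfl⟩ := Finset.mem_image.mp hj
      calc g j0 ≤ Fintype.card S * (C.card - 1) := hbd j0 hj0
        _ ≤ Fintype.card S * φ.size := Nat.mul_le_mul_left _ (by omega)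
    have hsat : FX.Sat (fun i => L (σ i)) 0 (fun _ => Fintype.card S * φ.size) φ :=
      FX.satSet_to_sat hB φ 0 htrans
    have hσ0 : σ 0 = s₀ := by
      have h := hσg 0 h0C
      rw [hg0] at h
      rw [h, hπ0]
    obtain ⟨n, hn⟩ := FX.sat_prefix φ 0 hsat
    refine pos_of_cylinder P s₀ μ hcyl _ σ n hσ0 hσstep ?_
    intro π' hπ'
    exact hn (fun i => L (π' i)) (fun k hk => congrArg L (hπ' k hk))
  · intro h
    exact ⟨_, h⟩
end

section
/- 3-SAT reduction correctness: let φ = C₁ ∧ … ∧ C_k be a 3-CNF formula over boolean variables t₁,…,t_n, each clause C_i = d_{i1} ∨ d_{i2} ∨ d_{i3} with literals d_{il} ∈ {t_j, ¬t_j}. Define the Markov chain M with AP = {C₁,…,C_k}, states S = {s₀,…,s_n} ∪ {t₁,…,t_n} ∪ {¬t₁,…,¬t_n}, transitions P(s_i,t_{i+1}) > 0 and P(s_i,¬t_{i+1}) > 0 for 0 ≤ i < n, P(t_i,s_i) = 1 and P(¬t_i,s_i) = 1 for 0 < i ≤ n, and P(s_n,s_n) = 1; labels C_i ∈ L(t_j)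 iff some literal of C_i is t_j, C_i ∈ L(¬t_j) iff some literal of C_i is ¬t_j, and L(s_j) = ∅ for all j. Let ψ = ◇_{≤y₁} C₁ ∧ … ∧ ◇_{≤y_k} C_k. Then φ is satisfiable (as a propositional formula) if and only if V_{>0}(ψ) ≠ ∅. -/
open MeasureTheory
open scoped ENNReal

/-!
Give the state `s_i` (`Sum.inl i`) level `2i` and the literal states `t_{i+1}`, `¬t_{i+1}`
(`Sum.inr (i, b)`) level `2i + 1`. Every transition of positive probability raises the level by
one until it reaches `2n`, and almost every path takes only such transitions, so it is at level
`min j (2n)` at time `j`. Hence it visits exactly one literal state per variable, at time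
`2i + 1`, and the clauses it meets are those satisfied by the assignment it reads off.
Conversely, the path that follows a satisfying assignment meets every clause by time `2n`, and
its cylinder of length `2n` has positive probability.
-/

section MarkovMeasure

variable {S : Type*} [MeasurableSpace S]

def IsMarkovMeasure [DecidableEq S] (μ : Measure (ℕ → S)) (s₀ : S) (P : S → S → ℝ≥0∞) :
    Prop :=
  ∀ (N : ℕ) (u : ℕ → S), μ {π | ∀ j ≤ N, π j = u j} =
    (if u 0 = s₀ then 1 else 0) * ∏ j ∈ Finset.range N, P (u j) (u (j + 1))

theorem ae_cylinder_ne_zero [Countable S] (μ : Measure (ℕ → S)) (N : ℕ) :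
    ∀ᵐ π ∂μ, μ {σ | ∀ j ≤ N, σ j = π j} ≠ 0 := by
  -- countably many prefixes, and the paths sharing a prefix form a single cylinder
  set B := {π : ℕ → S | μ {σ | ∀ j ≤ N, σ j = π j} = 0}
  have hcover : B ⊆ ⋃ w : Fin (N + 1) → S, B ∩ {π | ∀ m : Fin (N + 1), π m = w m} :=
    fun π hπ => Set.mem_iUnion.2 ⟨fun m => π m, hπ, fun _ => rfl⟩
  simp only [ae_iff, not_not]
  refine measure_mono_null hcover (measure_iUnion_null fun w => ?_)
  rcases (B ∩ {π | ∀ m : Fin (N + 1), π m = w m}).eq_empty_or_nonempty with h | ⟨π₀, hπ₀B, hπ₀w⟩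
  · rw [h, measure_empty]
  · refine measure_mono_null ?_ hπ₀B
    rintro π ⟨-, hπw⟩ j hj
    simpa [hπ₀w ⟨j, by omega⟩] using hπw ⟨j, by omega⟩

variable [DecidableEq S] {μ : Measure (ℕ → S)} {s₀ : S} {P : S → S → ℝ≥0∞}

theorem IsMarkovMeasure.ae_isPath [Countable S] (hμ : IsMarkovMeasure μ s₀ P) :
    ∀ᵐ π ∂μ, π 0 = s₀ ∧ ∀ j, 0 < P (π j) (π (j + 1)) := by
  filter_upwards [ae_all_iff.2 (ae_cylinder_ne_zero μ)] with π hπ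
  refine ⟨by_contra fun h0 => hπ 0 ?_, fun j => pos_iff_ne_zero.2 fun hj => hπ (j + 1) ?_⟩
  · rw [hμ, if_neg h0, zero_mul]
  · rw [hμ, Finset.prod_range_succ, hj, mul_zero, mul_zero]

theorem IsMarkovMeasure.cylinder_pos (hμ : IsMarkovMeasure μ s₀ P) {N : ℕ} {u : ℕ → S}
    (h0 : u 0 = s₀) (hstep : ∀ j < N, 0 < P (u j) (u (j + 1))) :
    0 < μ {π | ∀ j ≤ N, π j = u j} := by
  rw [hμ, if_pos h0, one_mul]
  exact CanonicallyOrderedAdd.prod_pos.2 fun j hj => hstep j (Finset.mem_range.1 hj)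

end MarkovMeasure

section ThreeSatChain

abbrev ChainState (n : ℕ) := Fin (n + 1) ⊕ Fin n × Bool

variable {n : ℕ}

def ChainState.IsEdge (s t : ChainState n) : Prop :=
  (∃ (i : Fin n) (b : Bool), s = Sum.inl i.castSucc ∧ t = Sum.inr (i, b)) ∨
    (∃ (i : Fin n) (b : Bool), s = Sum.inr (i, b) ∧ t = Sum.inl i.succ) ∨
    (s = Sum.inl (Fin.last n) ∧ t = Sum.inl (Fin.last n))

def ChainState.level : ChainState n → ℕ
  | .inl i => 2 * i
  | .inr (i, _) => 2 * i + 1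

theorem ChainState.IsEdge.level_eq {s t : ChainState n} (h : s.IsEdge t) :
    t.level = min (s.level + 1) (2 * n) := by
  rcases h with ⟨i, b, rfl, rfl⟩ | ⟨i, b, rfl, rfl⟩ | ⟨rfl, rfl⟩ <;>
    simp [ChainState.level]
  omega

section EdgePath

variable {π : ℕ → ChainState n} (hπ0 : π 0 = .inl 0) (hπ : ∀ j, (π j).IsEdge (π (j + 1)))
include hπ0 hπ

theorem level_eq_min_of_isEdge (j : ℕ) : (π j).level = min j (2 * n) := by
  induction j with
  | zero => simp [hπ0, ChainState.level]
  | succ j ih => rw [(hπ j).level_eq, ih]; omega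

theorem eq_two_mul_add_one_of_eq_inr {j : ℕ} {m : Fin n} {b : Bool}
    (hj : π j = .inr (m, b)) : j = 2 * m + 1 := by
  have := level_eq_min_of_isEdge hπ0 hπ j
  rw [hj, ChainState.level] at this
  omega

theorem exists_assignment_of_isEdge :
    ∃ α : Fin n → Bool, ∀ j m b, π j = .inr (m, b) → α m = b := by
  refine ⟨fun m => decide (π (2 * m + 1) = .inr (m, true)), fun j m b hj => ?_⟩
  obtain rfl := eq_two_mul_add_one_of_eq_inr hπ0 hπ hj
  cases b <;> simp [hj]

end EdgePath

def assignmentStep (α : Fin n → Bool) : ChainState n → ChainState n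
  | .inl i => if h : (i : ℕ) < n then .inr (i.castLT h, α (i.castLT h)) else .inl (Fin.last n)
  | .inr (i, _) => .inl i.succ

def assignmentPath (α : Fin n → Bool) : ℕ → ChainState n
  | 0 => .inl 0
  | j + 1 => assignmentStep α (assignmentPath α j)

theorem assignmentPath_two_mul (α : Fin n → Bool) {m : ℕ} (hm : m ≤ n) :
    assignmentPath α (2 * m) = .inl ⟨m, by omega⟩ := by
  induction m with
  | zero => rfl
  | succ m ih =>
    rw [show 2 * (m + 1) = 2 * m + 1 + 1 by ring, assignmentPath, assignmentPath,
      ih (by omega)]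
    simp [assignmentStep, show m < n by omega]

theorem assignmentPath_two_mul_add_one (α : Fin n → Bool) (m : Fin n) :
    assignmentPath α (2 * m + 1) = .inr (m, α m) := by
  rw [assignmentPath, assignmentPath_two_mul α m.is_lt.le, assignmentStep, dif_pos m.is_lt]
  rfl

theorem transition_pos_assignmentStep {P : ChainState n → ChainState n → ℝ≥0∞}
    (hchoice : ∀ (i : Fin n) (b : Bool), 0 < P (Sum.inl i.castSucc) (Sum.inr (i, b)))
    (hback : ∀ (i : Fin n) (b : Bool), P (Sum.inr (i, b)) (Sum.inl i.succ) = 1)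
    (hlast : P (Sum.inl (Fin.last n)) (Sum.inl (Fin.last n)) = 1)
    (α : Fin n → Bool) (s : ChainState n) : 0 < P s (assignmentStep α s) := by
  rcases s with i | ⟨i, b⟩
  · by_cases h : (i : ℕ) < n
    · simpa [assignmentStep, h] using hchoice (i.castLT h) (α (i.castLT h))
    · simp [assignmentStep, Fin.eq_last_of_not_lt h, hlast]
  · simp [assignmentStep, hback]

end ThreeSatChain

theorem threeSat_reduction_correct_general (n k : ℕ)
    (clauses : Fin k → Fin 3 → Fin n × Bool)
    (P : (Fin (n + 1) ⊕ Fin n × Bool) → (Fin (n + 1) ⊕ Fin n × Bool) → ℝ≥0∞)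
    (hchoice : ∀ (i : Fin n) (b : Bool), 0 < P (Sum.inl i.castSucc) (Sum.inr (i, b)))
    (hback : ∀ (i : Fin n) (b : Bool), P (Sum.inr (i, b)) (Sum.inl i.succ) = 1)
    (hlast : P (Sum.inl (Fin.last n)) (Sum.inl (Fin.last n)) = 1)
    (hsupp : ∀ s t, 0 < P s t →
      (∃ (i : Fin n) (b : Bool), s = Sum.inl i.castSucc ∧ t = Sum.inr (i, b)) ∨
      (∃ (i : Fin n) (b : Bool), s = Sum.inr (i, b) ∧ t = Sum.inl i.succ) ∨
      (s = Sum.inl (Fin.last n) ∧ t = Sum.inl (Fin.last n)))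
    (Lab : (Fin (n + 1) ⊕ Fin n × Bool) → Set (Fin k))
    (hLs : ∀ j : Fin (n + 1), Lab (Sum.inl j) = ∅)
    (hLt : ∀ (j : Fin n) (b : Bool),
      Lab (Sum.inr (j, b)) = {i : Fin k | ∃ l : Fin 3, clauses i l = (j, b)})
    (μ : Measure (ℕ → (Fin (n + 1) ⊕ Fin n × Bool)))
    (hcyl : ∀ (N : ℕ) (u : ℕ → (Fin (n + 1) ⊕ Fin n × Bool)),
      μ {π | ∀ j ≤ N, π j = u j} =
        (if u 0 = Sum.inl (0 : Fin (n + 1)) then 1 else 0) *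
          ∏ j ∈ Finset.range N, P (u j) (u (j + 1))) :
    (∃ α : Fin n → Bool,
        ∀ i : Fin k, ∃ l : Fin 3, α (clauses i l).1 = (clauses i l).2) ↔
      {v : Fin k → ℕ |
        0 < μ {π | ∀ i : Fin k, ∃ j ≤ v i, i ∈ Lab (π j)}}.Nonempty := by
  have hμ : IsMarkovMeasure μ (.inl 0) P := hcyl
  constructor
  · rintro ⟨α, hα⟩
    have hpos := hμ.cylinder_pos (N := 2 * n) (u := assignmentPath α) rfl
      fun j _ => transition_pos_assignmentStep hchoice hback hlast α _
    refine ⟨fun _ => 2 * n, hpos.trans_le (measure_mono fun π hπ i => ?_)⟩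
    obtain ⟨l, hl⟩ := hα i
    refine ⟨2 * (clauses i l).1 + 1, by dsimp only; omega, ?_⟩
    rw [hπ _ (by omega), assignmentPath_two_mul_add_one, hl, hLt]
    exact ⟨l, rfl⟩
  · rintro ⟨v, hv⟩
    obtain ⟨π, hπv, hπ0, hπ⟩ :=
      ((frequently_ae_mem_iff.2 hv.ne').and_eventually hμ.ae_isPath).exists
    obtain ⟨α, hα⟩ := exists_assignment_of_isEdge hπ0 fun j => hsupp _ _ (hπ j)
    refine ⟨α, fun i => ?_⟩
    obtain ⟨j, -, hj⟩ := hπv i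
    rcases hπj : π j with s | ⟨m, b⟩
    · simp [hπj, hLs] at hj
    · obtain ⟨l, hl⟩ : ∃ l, clauses i l = (m, b) := by rwa [hπj, hLt] at hj
      exact ⟨l, by rw [hl]; exact hα j m b hπj⟩

/-- Correctness of the 3-SAT reduction: for a 3-CNF formula with `k` clauses over `n`
boolean variables (clause `i` consists of the three literals `clauses i l`, where a literal
`(j, b)` denotes `t_j` if `b = true` and `¬t_j` if `b = false`), and the Markov chain with
states `Fin (n+1) ⊕ Fin n × Bool` (state `inl i` is `s_i`; state `inr (j, tt/ff)` is the
literal state `t_{j+1}` / `¬t_{j+1}`), transitions and labels as described, the 3-CNF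
formula is satisfiable iff `V_{>0}(◇_{≤y₁}C₁ ∧ … ∧ ◇_{≤y_k}C_k) ≠ ∅`. -/
theorem threeSat_reduction_correct (n k : ℕ)
    (clauses : Fin k → Fin 3 → Fin n × Bool)
    (P : (Fin (n + 1) ⊕ Fin n × Bool) → (Fin (n + 1) ⊕ Fin n × Bool) → ℝ≥0∞)
    (hrow : ∀ s, ∑ t, P s t = 1)
    (hchoice : ∀ (i : Fin n) (b : Bool), 0 < P (Sum.inl i.castSucc) (Sum.inr (i, b)))
    (hback : ∀ (i : Fin n) (b : Bool), P (Sum.inr (i, b)) (Sum.inl i.succ) = 1)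
    (hlast : P (Sum.inl (Fin.last n)) (Sum.inl (Fin.last n)) = 1)
    (hsupp : ∀ s t, 0 < P s t →
      (∃ (i : Fin n) (b : Bool), s = Sum.inl i.castSucc ∧ t = Sum.inr (i, b)) ∨
      (∃ (i : Fin n) (b : Bool), s = Sum.inr (i, b) ∧ t = Sum.inl i.succ) ∨
      (s = Sum.inl (Fin.last n) ∧ t = Sum.inl (Fin.last n)))
    (Lab : (Fin (n + 1) ⊕ Fin n × Bool) → Set (Fin k))
    (hLs : ∀ j : Fin (n + 1), Lab (Sum.inl j) = ∅)
    (hLt : ∀ (j : Fin n) (b : Bool),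
      Lab (Sum.inr (j, b)) = {i : Fin k | ∃ l : Fin 3, clauses i l = (j, b)})
    (μ : Measure (ℕ → (Fin (n + 1) ⊕ Fin n × Bool))) (hprob : IsProbabilityMeasure μ)
    (hcyl : ∀ (N : ℕ) (u : ℕ → (Fin (n + 1) ⊕ Fin n × Bool)),
      μ {π | ∀ j ≤ N, π j = u j} =
        (if u 0 = Sum.inl (0 : Fin (n + 1)) then 1 else 0) *
          ∏ j ∈ Finset.range N, P (u j) (u (j + 1))) :
    (∃ α : Fin n → Bool,
        ∀ i : Fin k, ∃ l : Fin 3, α (clauses i l).1 = (clauses i l).2) ↔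
      {v : Fin k → ℕ |
        0 < μ {π | ∀ i : Fin k, ∃ j ≤ v i, i ∈ Lab (π j)}}.Nonempty :=
  threeSat_reduction_correct_general n k clauses P hchoice hback hlast hsupp Lab hLs hLt μ hcyl
end

section
/- For every pLTL(F,X) formula φ with d ≥ 1 parameter variables and finite Markov chain M with m states, setting N := m·|φ|, the set min V_{>0}(φ) of minimal elements of V_{>0}(φ) with respect to pointwise ≤ on ℕ^Var is an antichain contained in {0,…,N}^d, and its cardinality is at most (N·d)^{d−1}. -/
open MeasureTheory
open scoped ENNReal

/-!
If `v(φ)` holds with positive probability, some finite path prefix of positive probability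
forces `φ`, and it extends to an infinite path of the chain. On that path the satisfaction of `φ`
is certified by a set `W` of at most `|φ|` positions containing `0`. When two consecutive
positions of `W` are more than `m` apart, a state repeats between them; cutting out that loop
moves the later positions closer without breaking any bounded `◇`, so eventually all positions
are at most `m·|φ| = N`. Hence capping `v` at `N` keeps the probability positive, and the minimal
valuations lie in `{0,…,N}^d`. An antichain in that box is determined by `d - 1` of the
coordinates of its elements, so it has at most `(N+1)^(d-1) ≤ (N·d)^(d-1)` elements.
-/

open Finset

namespace FX

variable {AP Var : Type}

/-- `(w, i, v) ⊨ φ`, certified by the positions in `W`: every position at which a subformula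
is evaluated, in particular every witness chosen for a `◇`, lies in `W`. -/
def SatW (w : ℕ → Set AP) (v : Var → ℕ) (W : Finset ℕ) : ℕ → FX AP Var → Prop
  | i, atom a => i ∈ W ∧ a ∈ w i
  | i, natom a => i ∈ W ∧ a ∉ w i
  | i, and φ ψ => i ∈ W ∧ SatW w v W i φ ∧ SatW w v W i ψ
  | i, or φ ψ => i ∈ W ∧ (SatW w v W i φ ∨ SatW w v W i ψ)
  | i, next φ => i ∈ W ∧ SatW w v W (i + 1) φ
  | i, ev φ => i ∈ W ∧ ∃ j, i ≤ j ∧ SatW w v W j φ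
  | i, evVar x φ => i ∈ W ∧ ∃ j, i ≤ j ∧ j ≤ v x + i ∧ SatW w v W j φ
  | i, evConst c φ => i ∈ W ∧ ∃ j, i ≤ j ∧ j ≤ c + i ∧ SatW w v W j φ

variable {w w' : ℕ → Set AP} {v : Var → ℕ} {W W' : Finset ℕ}

theorem size_pos (φ : FX AP Var) : 0 < φ.size := by
  cases φ <;> simp [size]

theorem SatW.mem {i : ℕ} {φ : FX AP Var} (h : SatW w v W i φ) : i ∈ W := by
  cases φ <;> exact h.1

theorem SatW.mono (hWW' : W ⊆ W') {φ : FX AP Var} {i : ℕ} (h : SatW w v W i φ) :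
    SatW w v W' i φ := by
  induction φ generalizing i with
  | atom | natom => exact ⟨hWW' h.1, h.2⟩
  | and φ ψ ihφ ihψ => exact ⟨hWW' h.1, ihφ h.2.1, ihψ h.2.2⟩
  | or φ ψ ihφ ihψ => exact ⟨hWW' h.1, h.2.imp ihφ ihψ⟩
  | next φ ih => exact ⟨hWW' h.1, ih h.2⟩
  | ev φ ih => exact ⟨hWW' h.1, h.2.imp fun j hj => ⟨hj.1, ih hj.2⟩⟩
  | evVar x φ ih | evConst c φ ih =>
    exact ⟨hWW' h.1, h.2.imp fun j hj => ⟨hj.1, hj.2.1, ih hj.2.2⟩⟩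

theorem Sat.exists_satW {φ : FX AP Var} {i : ℕ} (h : Sat w i v φ) :
    ∃ W : Finset ℕ, SatW w v W i φ ∧ #W ≤ φ.size := by
  have hins : ∀ {i n : ℕ} {W : Finset ℕ}, #W ≤ n → #(insert i W) ≤ n + 1 :=
    fun h => (card_insert_le _ _).trans (Nat.add_le_add_right h 1)
  induction φ generalizing i with
  | atom | natom => exact ⟨{i}, ⟨mem_singleton_self i, h⟩, by simp [size]⟩
  | and φ ψ ihφ ihψ =>
    obtain ⟨Wφ, hφ, hcφ⟩ := ihφ h.1
    obtain ⟨Wψ, hψ, hcψ⟩ := ihψ h.2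
    refine ⟨insert i (Wφ ∪ Wψ), ⟨mem_insert_self _ _, hφ.mono ?_, hψ.mono ?_⟩,
      hins ((card_union_le _ _).trans (Nat.add_le_add hcφ hcψ))⟩
    · exact subset_union_left.trans (subset_insert _ _)
    · exact subset_union_right.trans (subset_insert _ _)
  | or φ ψ ihφ ihψ =>
    rcases h with h | h
    · obtain ⟨Wφ, hφ, hcφ⟩ := ihφ h
      exact ⟨insert i Wφ, ⟨mem_insert_self _ _, .inl (hφ.mono (subset_insert _ _))⟩,
        hins (hcφ.trans (Nat.le_add_right _ _))⟩
    · obtain ⟨Wψ, hψ, hcψ⟩ := ihψ h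
      exact ⟨insert i Wψ, ⟨mem_insert_self _ _, .inr (hψ.mono (subset_insert _ _))⟩,
        hins (hcψ.trans (Nat.le_add_left _ _))⟩
  | next φ ih =>
    obtain ⟨Wφ, hφ, hcφ⟩ := ih h
    exact ⟨insert i Wφ, ⟨mem_insert_self _ _, hφ.mono (subset_insert _ _)⟩, hins hcφ⟩
  | ev φ ih =>
    obtain ⟨j, hij, hj⟩ := h
    obtain ⟨Wφ, hφ, hcφ⟩ := ih hj
    exact ⟨insert i Wφ, ⟨mem_insert_self _ _, j, hij, hφ.mono (subset_insert _ _)⟩, hins hcφ⟩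
  | evVar x φ ih | evConst c φ ih =>
    obtain ⟨j, hij, hji, hj⟩ := h
    obtain ⟨Wφ, hφ, hcφ⟩ := ih hj
    exact ⟨insert i Wφ, ⟨mem_insert_self _ _, j, hij, hji, hφ.mono (subset_insert _ _)⟩,
      hins hcφ⟩

theorem SatW.reindex (g : ℕ → ℕ) (hw : ∀ j ∈ W, w' (g j) = w j)
    (hg : ∀ p ∈ W, ∀ q ∈ W, p ≤ q → g p ≤ g q ∧ g q ≤ g p + (q - p))
    (hsucc : ∀ i ∈ W, i + 1 ∈ W → g (i + 1) = g i + 1)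
    {φ : FX AP Var} {i : ℕ} (h : SatW w v W i φ) : SatW w' v (W.image g) (g i) φ := by
  induction φ generalizing i with
  | atom | natom => exact ⟨mem_image_of_mem g h.1, by rw [hw i h.1]; exact h.2⟩
  | and φ ψ ihφ ihψ => exact ⟨mem_image_of_mem g h.1, ihφ h.2.1, ihψ h.2.2⟩
  | or φ ψ ihφ ihψ => exact ⟨mem_image_of_mem g h.1, h.2.imp ihφ ihψ⟩
  | next φ ih =>
    refine ⟨mem_image_of_mem g h.1, ?_⟩
    rw [← hsucc i h.1 h.2.mem]
    exact ih h.2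
  | ev φ ih =>
    obtain ⟨j, hij, hj⟩ := h.2
    exact ⟨mem_image_of_mem g h.1, g j, (hg i h.1 j hj.mem hij).1, ih hj⟩
  | evVar x φ ih | evConst c φ ih =>
    obtain ⟨j, hij, hji, hj⟩ := h.2
    have := hg i h.1 j hj.mem hij
    exact ⟨mem_image_of_mem g h.1, g j, this.1, by omega, ih hj⟩

theorem SatW.sat_min {N : ℕ} (hW : ∀ j ∈ W, j ≤ N) {φ : FX AP Var} {i : ℕ}
    (h : SatW w v W i φ) : Sat w i (fun x => min (v x) N) φ := by
  induction φ generalizing i with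
  | atom | natom => exact h.2
  | and φ ψ ihφ ihψ => exact ⟨ihφ h.2.1, ihψ h.2.2⟩
  | or φ ψ ihφ ihψ => exact h.2.imp ihφ ihψ
  | next φ ih => exact ih h.2
  | ev φ ih =>
    obtain ⟨j, hij, hj⟩ := h.2
    exact ⟨j, hij, ih hj⟩
  | evVar x φ ih =>
    obtain ⟨j, hij, hji, hj⟩ := h.2
    have := hW j hj.mem
    exact ⟨j, hij, show j ≤ min (v x) N + i by omega, ih hj⟩
  | evConst c φ ih =>
    obtain ⟨j, hij, hji, hj⟩ := h.2
    exact ⟨j, hij, hji, ih hj⟩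

theorem Sat.exists_prefix {φ : FX AP Var} {i : ℕ} (h : Sat w i v φ) :
    ∃ n, ∀ w' : ℕ → Set AP, (∀ k ≤ n, w' k = w k) → Sat w' i v φ := by
  induction φ generalizing i with
  | atom a => exact ⟨i, fun w' hw' => by simpa only [Sat, hw' i le_rfl] using h⟩
  | natom a => exact ⟨i, fun w' hw' => by simpa only [Sat, hw' i le_rfl] using h⟩
  | and φ ψ ihφ ihψ =>
    obtain ⟨nφ, hφ⟩ := ihφ h.1
    obtain ⟨nψ, hψ⟩ := ihψ h.2
    exact ⟨max nφ nψ, fun w' hw' =>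
      ⟨hφ w' fun k hk => hw' k (hk.trans (le_max_left _ _)),
        hψ w' fun k hk => hw' k (hk.trans (le_max_right _ _))⟩⟩
  | or φ ψ ihφ ihψ =>
    rcases h with h | h
    · obtain ⟨n, hn⟩ := ihφ h
      exact ⟨n, fun w' hw' => .inl (hn w' hw')⟩
    · obtain ⟨n, hn⟩ := ihψ h
      exact ⟨n, fun w' hw' => .inr (hn w' hw')⟩
  | next φ ih => exact ih h
  | ev φ ih =>
    obtain ⟨j, hij, hj⟩ := h
    obtain ⟨n, hn⟩ := ih hj
    exact ⟨n, fun w' hw' => ⟨j, hij, hn w' hw'⟩⟩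
  | evVar x φ ih | evConst c φ ih =>
    obtain ⟨j, hij, hji, hj⟩ := h
    obtain ⟨n, hn⟩ := ih hj
    exact ⟨n, fun w' hw' => ⟨j, hij, hji, hn w' hw'⟩⟩

end FX

/-- `cutSeq u a l` deletes the entries `u (a + 1), …, u (a + l)`; `cutMap a l` sends every
other position of `u` to its position in `cutSeq u a l`. -/
def cutSeq {α : Type} (u : ℕ → α) (a l : ℕ) (k : ℕ) : α := if k ≤ a then u k else u (k + l)

def cutMap (a l : ℕ) (j : ℕ) : ℕ := if j ≤ a then j else j - l

theorem comp_cutSeq {α β : Type} (f : α → β) (u : ℕ → α) (a l : ℕ) :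
    (fun k => f (cutSeq u a l k)) = cutSeq (fun k => f (u k)) a l := by
  funext k
  unfold cutSeq
  split_ifs <;> rfl

theorem cutSeq_chain {α : Type} {R : α → α → Prop} {u : ℕ → α} {a l : ℕ}
    (hu : ∀ k, R (u k) (u (k + 1))) (hloop : u (a + l) = u a) (k : ℕ) :
    R (cutSeq u a l k) (cutSeq u a l (k + 1)) := by
  unfold cutSeq
  rcases lt_trichotomy k a with hk | rfl | hk
  · simpa [hk.le, Nat.succ_le_of_lt hk] using hu k
  · simpa [← hloop, Nat.add_right_comm] using hu (k + l)
  · simpa [show ¬k ≤ a by omega, show ¬k + 1 ≤ a by omega, Nat.add_right_comm] using hu (k + l)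

theorem FX.SatW.cut {AP Var : Type} {w : ℕ → Set AP} {v : Var → ℕ} {W : Finset ℕ} {a l : ℕ}
    (hW : ∀ j ∈ W, j ≤ a ∨ a + l < j) {φ : FX AP Var} {i : ℕ} (h : SatW w v W i φ) :
    SatW (cutSeq w a l) v (W.image (cutMap a l)) (cutMap a l i) φ := by
  refine h.reindex _ (fun j hj => ?_) (fun p hp q hq hpq => ?_) (fun j hj hj' => ?_)
  · unfold cutSeq cutMap
    rcases hW j hj with h | h
    · simp [h]
    · simp [show ¬j ≤ a by omega, show ¬j - l ≤ a by omega, show j - l + l = j by omega]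
  · unfold cutMap
    rcases hW p hp with h | h <;> rcases hW q hq with h' | h' <;> split_ifs <;> omega
  · unfold cutMap
    rcases hW j hj with h | h <;> rcases hW (j + 1) hj' with h' | h' <;> split_ifs <;> omega

theorem Fintype.exists_lt_map_eq_within_card {S : Type} [Fintype S] (u : ℕ → S) (p : ℕ) :
    ∃ a b, p ≤ a ∧ a < b ∧ b ≤ p + Fintype.card S ∧ u a = u b := by
  obtain ⟨x, hx, y, hy, hxy, huxy⟩ := exists_ne_map_eq_of_card_lt_of_maps_to
    (s := Icc p (p + Fintype.card S)) (t := univ) (by simp; omega) (f := u) (fun _ _ => by simp)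
  simp only [mem_Icc] at hx hy
  rcases hxy.lt_or_gt with h | h
  · exact ⟨x, y, hx.1, h, hy.2, huxy⟩
  · exact ⟨y, x, hy.1, h, hx.2, huxy.symm⟩

theorem Finset.exists_gap_or_forall_le_mul (m : ℕ) (W : Finset ℕ) (h0 : 0 ∈ W) :
    (∀ j ∈ W, j ≤ m * (#W - 1)) ∨
      ∃ p ∈ W, ∃ q ∈ W, p + m < q ∧ ∀ r ∈ W, r ≤ p ∨ q ≤ r := by
  induction W using Finset.induction_on_max with
  | empty => simp at h0
  | insert a s hlt ih =>
    rcases s.eq_empty_or_nonempty with rfl | hs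
    · simp_all [eq_comm]
    have hmax := s.max'_mem hs
    have ha : a ∉ s := fun ha => (hlt a ha).false
    have h0s : 0 ∈ s := by
      rcases mem_insert.mp h0 with h | h
      · exact absurd (hlt _ hmax) (by omega)
      · exact h
    rw [card_insert_of_notMem ha, Nat.add_sub_cancel]
    rcases ih h0s with hle | ⟨p, hp, q, hq, hpq, hgap⟩
    · by_cases hfar : s.max' hs + m < a
      · refine .inr ⟨_, mem_insert_of_mem hmax, a, mem_insert_self a s, hfar, fun r hr => ?_⟩
        rcases mem_insert.mp hr with rfl | hr
        · exact .inr le_rfl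
        · exact .inl (s.le_max' r hr)
      · have hs1 : 1 ≤ #s := card_pos.mpr hs
        have hm : m * (#s - 1) + m = m * #s := by
          rw [← Nat.mul_succ, Nat.succ_eq_add_one, Nat.sub_add_cancel hs1]
        refine .inl fun j hj => ?_
        rcases mem_insert.mp hj with rfl | hj
        · have := hle _ hmax; omega
        · have := hle j hj
          have := Nat.mul_le_mul_left m (Nat.sub_le #s 1)
          omega
    · refine .inr ⟨p, mem_insert_of_mem hp, q, mem_insert_of_mem hq, hpq, fun r hr => ?_⟩
      rcases mem_insert.mp hr with rfl | hr
      · exact .inr (hlt q hq).le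
      · exact hgap r hr

section Pumping

variable {AP Var S : Type} [Fintype S] {R : S → S → Prop} {L : S → Set AP} {v : Var → ℕ}
  {φ : FX AP Var} {u : ℕ → S} {W : Finset ℕ}

/-- A gap of `W` longer than `|S|` contains a loop of `u`, which can be cut out. -/
theorem exists_cut_satW (hu : ∀ k, R (u k) (u (k + 1)))
    (h : FX.SatW (fun t => L (u t)) v W 0 φ) {p q : ℕ} (hq : q ∈ W)
    (hpq : p + Fintype.card S < q) (hgap : ∀ r ∈ W, r ≤ p ∨ q ≤ r) :
    ∃ (u' : ℕ → S) (W' : Finset ℕ), (∀ k, R (u' k) (u' (k + 1))) ∧ u' 0 = u 0 ∧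
      FX.SatW (fun t => L (u' t)) v W' 0 φ ∧ #W' ≤ #W ∧ W'.sup id < W.sup id := by
  obtain ⟨a, b, hpa, hab, hb, hloop⟩ := Fintype.exists_lt_map_eq_within_card u p
  set l := b - a
  have hW : ∀ j ∈ W, j ≤ a ∨ a + l < j := fun j hj => (hgap j hj).imp (by omega) (by omega)
  have hq' : q ≤ W.sup id := le_sup (f := id) hq
  refine ⟨cutSeq u a l, W.image (cutMap a l),
    cutSeq_chain hu (by rw [Nat.add_sub_cancel' hab.le, hloop]), by simp [cutSeq], ?_,
    card_image_le, ?_⟩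
  · rw [comp_cutSeq]
    simpa [cutMap] using h.cut hW
  · refine (Finset.sup_lt_iff (show 0 < W.sup id by omega)).2 ?_
    simp only [mem_image]
    rintro _ ⟨j, hj, rfl⟩
    have := le_sup (f := id) hj
    unfold cutMap
    split_ifs <;> simp only [id] at * <;> omega

theorem exists_chain_satW_le_mul (hu : ∀ k, R (u k) (u (k + 1)))
    (h : FX.SatW (fun t => L (u t)) v W 0 φ) :
    ∃ (u' : ℕ → S) (W' : Finset ℕ), (∀ k, R (u' k) (u' (k + 1))) ∧ u' 0 = u 0 ∧
      FX.SatW (fun t => L (u' t)) v W' 0 φ ∧ ∀ j ∈ W', j ≤ Fintype.card S * (#W - 1) := by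
  induction hn : W.sup id using Nat.strong_induction_on generalizing u W with
  | _ n ih =>
  rcases W.exists_gap_or_forall_le_mul (Fintype.card S) h.mem with
    hle | ⟨p, -, q, hq, hpq, hgap⟩
  · exact ⟨u, W, hu, rfl, h, hle⟩
  obtain ⟨u', W', hu', h0, h', hcard, hlt⟩ := exists_cut_satW hu h hq hpq hgap
  obtain ⟨u'', W'', hu'', h0', h'', hle⟩ := ih _ (hn ▸ hlt) hu' h' rfl
  exact ⟨u'', W'', hu'', h0'.trans h0, h'',
    fun j hj => (hle j hj).trans (Nat.mul_le_mul_left _ (by omega))⟩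

theorem exists_chain_sat_min (hu : ∀ k, R (u k) (u (k + 1)))
    (h : FX.Sat (fun t => L (u t)) 0 v φ) :
    ∃ u' : ℕ → S, (∀ k, R (u' k) (u' (k + 1))) ∧ u' 0 = u 0 ∧
      FX.Sat (fun t => L (u' t)) 0 (fun x => min (v x) (Fintype.card S * φ.size)) φ := by
  obtain ⟨W, hW, hcard⟩ := h.exists_satW
  obtain ⟨u', W', hu', h0, h', hle⟩ := exists_chain_satW_le_mul hu hW
  exact ⟨u', hu', h0,
    h'.sat_min fun j hj => (hle j hj).trans (Nat.mul_le_mul_left _ (by omega))⟩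

end Pumping

theorem exists_chain_extending {S : Type} {R : S → S → Prop} (hR : ∀ s, ∃ t, R s t)
    {u : ℕ → S} {n : ℕ} (hu : ∀ k < n, R (u k) (u (k + 1))) :
    ∃ u' : ℕ → S, (∀ k ≤ n, u' k = u k) ∧ ∀ k, R (u' k) (u' (k + 1)) := by
  choose f hf using hR
  set u' : ℕ → S := fun k => if k ≤ n then u k else f^[k - n] (u n)
  have htail : ∀ k, n ≤ k → u' k = f^[k - n] (u n) := by
    intro k hk
    by_cases h : k ≤ n
    · obtain rfl : k = n := by omega
      simp [u']
    · simp [u', h]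
  refine ⟨u', fun k hk => if_pos hk, fun k => ?_⟩
  rcases lt_or_ge k n with hk | hk
  · simpa [u', hk.le, Nat.succ_le_of_lt hk] using hu k hk
  · rw [htail k hk, htail (k + 1) (by omega), Nat.sub_add_comm hk, Function.iterate_succ_apply']
    exact hf _

section Cylinders

variable {S : Type}

/-- Open in the product topology of discrete `S`: membership is decided by a finite prefix. -/
def IsCylinderOpen (A : Set (ℕ → S)) : Prop :=
  ∀ π ∈ A, ∃ n, {π' | ∀ k ≤ n, π' k = π k} ⊆ A

theorem FX.isCylinderOpen_setOf_sat {AP Var : Type} (L : S → Set AP) (v : Var → ℕ)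
    (φ : FX AP Var) : IsCylinderOpen {π : ℕ → S | Sat (fun i => L (π i)) 0 v φ} := by
  intro π hπ
  obtain ⟨n, hn⟩ := Sat.exists_prefix hπ
  refine ⟨n, fun π' hπ' => hn _ fun k hk => ?_⟩
  rw [show π' k = π k from hπ' k hk]

variable [MeasurableSpace S] {μ : Measure (ℕ → S)}

theorem exists_cylinder_subset_of_measure_ne_zero [Countable S] {A : Set (ℕ → S)}
    (hA : IsCylinderOpen A) (hμ : μ A ≠ 0) :
    ∃ (π : ℕ → S) (n : ℕ),
      {π' | ∀ k ≤ n, π' k = π k} ⊆ A ∧ μ {π' | ∀ k ≤ n, π' k = π k} ≠ 0 := by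
  let C : (Σ n : ℕ, Fin (n + 1) → S) → Set (ℕ → S) := fun i =>
    {π | {π' | ∀ k ≤ i.1, π' k = π k} ⊆ A ∧ ∀ k : Fin (i.1 + 1), π k = i.2 k}
  have hcover : A ⊆ ⋃ i, C i := fun π hπ => by
    obtain ⟨n, hn⟩ := hA π hπ
    exact Set.mem_iUnion.2 ⟨⟨n, fun k => π k⟩, hn, fun _ => rfl⟩
  obtain ⟨⟨n, s⟩, hi⟩ : ∃ i, μ (C i) ≠ 0 := by
    by_contra! h
    exact hμ (measure_mono_null hcover (measure_iUnion_null h))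
  obtain ⟨π, hπA, hπs⟩ := nonempty_of_measure_ne_zero hi
  have hsub : C ⟨n, s⟩ ⊆ {π' | ∀ k ≤ n, π' k = π k} := fun ρ hρ k hk =>
    (hρ.2 ⟨k, Nat.lt_succ_of_le hk⟩).trans (hπs ⟨k, Nat.lt_succ_of_le hk⟩).symm
  exact ⟨π, n, hπA, fun h0 => hi (measure_mono_null hsub h0)⟩

variable [DecidableEq S] {P : S → S → ℝ≥0∞} {s₀ : S}

def IsPathMeasure (μ : Measure (ℕ → S)) (P : S → S → ℝ≥0∞) (s₀ : S) : Prop :=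
  ∀ (n : ℕ) (u : ℕ → S), μ {π | ∀ k ≤ n, π k = u k} =
    (if u 0 = s₀ then 1 else 0) * ∏ k ∈ range n, P (u k) (u (k + 1))

theorem measure_cylinder_ne_zero_iff (hcyl : IsPathMeasure μ P s₀) (n : ℕ) (u : ℕ → S) :
    μ {π | ∀ k ≤ n, π k = u k} ≠ 0 ↔ u 0 = s₀ ∧ ∀ k < n, P (u k) (u (k + 1)) ≠ 0 := by
  rw [hcyl n u]
  simp [prod_ne_zero_iff]

theorem measure_ne_zero_iff_exists_chain [Countable S] (hcyl : IsPathMeasure μ P s₀)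
    (hP : ∀ s, ∃ t, P s t ≠ 0) {A : Set (ℕ → S)} (hA : IsCylinderOpen A) :
    μ A ≠ 0 ↔ ∃ u ∈ A, u 0 = s₀ ∧ ∀ k, P (u k) (u (k + 1)) ≠ 0 := by
  constructor
  · intro hμ
    obtain ⟨π, n, hπA, hπ⟩ := exists_cylinder_subset_of_measure_ne_zero hA hμ
    obtain ⟨h0, hchain⟩ := (measure_cylinder_ne_zero_iff hcyl n π).1 hπ
    obtain ⟨u, hu, hchain'⟩ := exists_chain_extending hP hchain
    exact ⟨u, hπA hu, (hu 0 (Nat.zero_le n)).trans h0, hchain'⟩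
  · rintro ⟨u, huA, h0, hchain⟩ hμ
    obtain ⟨n, hn⟩ := hA u huA
    exact (measure_cylinder_ne_zero_iff hcyl n u).2 ⟨h0, fun k _ => hchain k⟩
      (measure_mono_null hn hμ)

theorem FX.measure_sat_min_ne_zero [Fintype S] (hcyl : IsPathMeasure μ P s₀)
    (hP : ∀ s, ∃ t, P s t ≠ 0) {AP Var : Type} {L : S → Set AP} {φ : FX AP Var} {v : Var → ℕ}
    (hv : μ {π | Sat (fun i => L (π i)) 0 v φ} ≠ 0) :
    μ {π | Sat (fun i => L (π i)) 0 (fun x => min (v x) (Fintype.card S * φ.size)) φ} ≠ 0 := by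
  rw [measure_ne_zero_iff_exists_chain hcyl hP (isCylinderOpen_setOf_sat L _ φ)] at hv ⊢
  obtain ⟨u, hu, h0, hchain⟩ := hv
  obtain ⟨u', hchain', h0', hu'⟩ :=
    exists_chain_sat_min (R := fun s t => P s t ≠ 0) hchain hu
  exact ⟨u', hu', h0'.trans h0, hchain'⟩

end Cylinders

theorem IsAntichain.natCard_le_of_forall_le {ι : Type} [Fintype ι] {A : Set (ι → ℕ)}
    (hA : IsAntichain (· ≤ ·) A) {N : ℕ} (hN : ∀ v ∈ A, ∀ i, v i ≤ N) :
    Nat.card A ≤ (N + 1) ^ (Fintype.card ι - 1) := by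
  classical
  rcases isEmpty_or_nonempty ι with hι | ⟨⟨i₀⟩⟩
  · simpa [Fintype.card_eq_zero] using
      Finite.card_le_one_iff_subsingleton.2 (inferInstance : Subsingleton A)
  -- two elements of `A` agreeing off `i₀` are comparable, hence equal
  let f : A → ({i // i ≠ i₀} → Fin (N + 1)) := fun v i =>
    ⟨v.1 i, Nat.lt_succ_of_le (hN v v.2 i)⟩
  have hf : Function.Injective f := by
    rintro ⟨v, hv⟩ ⟨w, hw⟩ hvw
    have hoff : ∀ i ≠ i₀, v i = w i := fun i hi => congrArg Fin.val (congrFun hvw ⟨i, hi⟩)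
    have hle : ∀ x y : ι → ℕ, (∀ i ≠ i₀, x i = y i) → x i₀ ≤ y i₀ → x ≤ y := by
      intro x y hxy h₀ i
      by_cases hi : i = i₀
      · exact hi ▸ h₀
      · exact (hxy i hi).le
    rcases le_total (v i₀) (w i₀) with h₀ | h₀
    · exact Subtype.ext (hA.eq hv hw (hle v w hoff h₀))
    · exact Subtype.ext (hA.eq hw hv (hle w v (fun i hi => (hoff i hi).symm) h₀)).symm
  calc Nat.card A ≤ Nat.card ({i // i ≠ i₀} → Fin (N + 1)) := Nat.card_le_card_of_injective f hf
    _ = (N + 1) ^ (Fintype.card ι - 1) := by simp [Fintype.card_subtype_compl]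

theorem Nat.add_one_pow_pred_le_mul_pow_pred {N d : ℕ} (hN : 1 ≤ N) :
    (N + 1) ^ (d - 1) ≤ (N * d) ^ (d - 1) := by
  rcases Nat.lt_or_ge d 2 with hd | hd
  · simp [show d - 1 = 0 by omega]
  · exact Nat.pow_le_pow_left (by nlinarith) _

theorem FX_min_Vpos_antichain_card_general
    {AP Var S : Type} [Fintype Var]
    [Fintype S] [DecidableEq S] [MeasurableSpace S]
    (P : S → S → ℝ≥0∞) (hP : ∀ s, ∑ t, P s t = 1)
    (s₀ : S) (L : S → Set AP)
    (μ : Measure (ℕ → S))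
    (hcyl : ∀ (n : ℕ) (u : ℕ → S),
      μ {π | ∀ k ≤ n, π k = u k} =
        (if u 0 = s₀ then 1 else 0) * ∏ k ∈ Finset.range n, P (u k) (u (k + 1)))
    (φ : FX AP Var)
    (V : Set (Var → ℕ))
    (hV : V = {v | 0 < μ {π | FX.Sat (fun i => L (π i)) 0 v φ}})
    (minV : Set (Var → ℕ))
    (hminV : minV = {v ∈ V | ∀ v' ∈ V, v' ≤ v → v' = v})
    (N d : ℕ) (hN : N = Fintype.card S * φ.size) (hd : d = Fintype.card Var) :
    IsAntichain (· ≤ ·) minV ∧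
    (∀ v ∈ minV, ∀ x : Var, v x ≤ N) ∧
    minV.Finite ∧
    Nat.card minV ≤ (N * d) ^ (d - 1) := by
  classical
  have hsucc : ∀ s, ∃ t, P s t ≠ 0 := fun s => by
    by_contra! h
    simpa [h] using hP s
  have hcap : ∀ v ∈ V, (fun x => min (v x) N) ∈ V := by
    rw [hV, hN]
    exact fun v hv => pos_iff_ne_zero.2 (FX.measure_sat_min_ne_zero hcyl hsucc hv.ne')
  have hbox : ∀ v ∈ minV, ∀ x : Var, v x ≤ N := by
    rw [hminV]
    rintro v ⟨hv, hmin⟩ x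
    have := congrFun (hmin _ (hcap v hv) fun y => min_le_left _ _) x
    omega
  have hanti : IsAntichain (· ≤ ·) minV := by
    rw [hminV]
    exact fun v hv w hw hne hle => hne (hw.2 v hv.1 hle)
  refine ⟨hanti, hbox, (Set.finite_Iic fun _ => N).subset fun v hv => hbox v hv, ?_⟩
  rcases minV.eq_empty_or_nonempty with h | ⟨v, hv⟩
  · simp [h]
  have : Nonempty S := by
    rw [hminV, hV] at hv
    obtain ⟨π, -⟩ := nonempty_of_measure_ne_zero hv.1.ne'
    exact ⟨π 0⟩
  calc Nat.card minV ≤ (N + 1) ^ (d - 1) := hd ▸ hanti.natCard_le_of_forall_le hbox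
    _ ≤ (N * d) ^ (d - 1) :=
      Nat.add_one_pow_pred_le_mul_pow_pred (hN ▸ Nat.mul_pos Fintype.card_pos φ.size_pos)

/-- For a pLTL(F,X) formula `φ` over `d ≥ 1` parameter variables and a finite Markov chain
`M` with `m` states, with `N = m·|φ|`: the set of minimal elements of `V_{>0}(φ)` (w.r.t.
the pointwise order) is an antichain contained in the box `{0,…,N}^d`, is finite, and has
cardinality at most `(N·d)^{d-1}`. -/
theorem FX_min_Vpos_antichain_card
    {AP Var S : Type} [Fintype Var] [Nonempty Var]
    [Fintype S] [DecidableEq S] [MeasurableSpace S]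
    (P : S → S → ℝ≥0∞) (hP : ∀ s, ∑ t, P s t = 1)
    (s₀ : S) (L : S → Set AP)
    (μ : Measure (ℕ → S)) (hprob : IsProbabilityMeasure μ)
    (hcyl : ∀ (n : ℕ) (u : ℕ → S),
      μ {π | ∀ k ≤ n, π k = u k} =
        (if u 0 = s₀ then 1 else 0) * ∏ k ∈ Finset.range n, P (u k) (u (k + 1)))
    (φ : FX AP Var)
    (V : Set (Var → ℕ))
    (hV : V = {v | 0 < μ {π | FX.Sat (fun i => L (π i)) 0 v φ}})
    (minV : Set (Var → ℕ))
    (hminV : minV = {v ∈ V | ∀ v' ∈ V, v' ≤ v → v' = v})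
    (N d : ℕ) (hN : N = Fintype.card S * φ.size) (hd : d = Fintype.card Var) :
    IsAntichain (· ≤ ·) minV ∧
    (∀ v ∈ minV, ∀ x : Var, v x ≤ N) ∧
    minV.Finite ∧
    Nat.card minV ≤ (N * d) ^ (d - 1) :=
  FX_min_Vpos_antichain_card_general P hP s₀ L μ hcyl φ V hV minV hminV N d hN hd
end

section
/- Zero-one law for bounded Büchi properties on a BSCC: let M = (S,P,s₀,L) be a finite Markov chain, a ∈ AP, B ⊆ S a bottom strongly connected component of M, and let n_{a,B} ∈ ℕ ∪ {∞} be the supremum of the lengths of path fragments that stay entirely inside B and contain no a-state. Then for every state s ∈ B and every n ∈ ℕ: Pr_s{π | π ⊨ □◇_{≤n} a} = 1 if and only if n > n_{a,B}, and Pr_s{π | π ⊨ □◇_{≤n} a} = 0 if and only if n ≤ n_{a,B}. -/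
open MeasureTheory
open scoped ENNReal

/-!
All probabilities are reduced to finite sums over paths: by the cylinder formula, the measure of
an event that depends only on the first `m` positions is at most the corresponding sum over paths
of length `m` from `s`.

If every `a`-free fragment inside `B` is shorter than `n`, then along any path from `s` (which
stays in `B`) every window `[i, i + n]` contains an `a`-state, so the complement of the event is
a countable union of null sets. Otherwise fix an `a`-free fragment `u` of length `n`. From every
state of `B` the chain can walk to `u 0` and then follow `u`, so within a uniform number `D` of
steps it produces an `a`-free window with positive probability; hence every block of `D` steps
is survived with probability at most some `r < 1`, and by the Markov property `K` consecutive
blocks are survived with probability at most `r ^ K`.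
-/

namespace BoundedBuchi

open Finset

variable {S : Type*}

def IsWalk (P : S → S → ℝ≥0∞) (m : ℕ) (π : ℕ → S) : Prop :=
  ∀ i < m, 0 < P (π i) (π (i + 1))

noncomputable def pathWeight (P : S → S → ℝ≥0∞) (m : ℕ) (π : ℕ → S) : ℝ≥0∞ :=
  ∏ k ∈ range m, P (π k) (π (k + 1))

def prepend (t : S) (π : ℕ → S) : ℕ → S
  | 0 => t
  | k + 1 => π k

def splice (d : ℕ) (π π' : ℕ → S) : ℕ → S :=
  fun k => if k < d then π k else π' (k - d)

def extendWord {m : ℕ} (v : Fin (m + 1) → S) : ℕ → S := fun k => v (Fin.clamp k m)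

def HitsEveryWindow (p : S → Prop) (n m : ℕ) (π : ℕ → S) : Prop :=
  ∀ i, i + n ≤ m → ∃ j, i ≤ j ∧ j ≤ i + n ∧ p (π j)

def IsAvoidingFragment (P : S → S → ℝ≥0∞) (B : Set S) (p : S → Prop) (n : ℕ) (u : ℕ → S) :
    Prop :=
  (∀ i ≤ n, u i ∈ B ∧ ¬ p (u i)) ∧ IsWalk P n u

section Paths

variable {P : S → S → ℝ≥0∞}

lemma isWalk_succ_prepend {m : ℕ} {t : S} {π : ℕ → S} :
    IsWalk P (m + 1) (prepend t π) ↔ 0 < P t (π 0) ∧ IsWalk P m π := by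
  refine ⟨fun h => ⟨h 0 m.succ_pos, fun i hi => h (i + 1) (by omega)⟩, ?_⟩
  rintro ⟨h0, h⟩ (_ | i) hi
  exacts [h0, h i (by omega)]

lemma IsWalk.mem_of_isClosed {B : Set S} (hB : ∀ s ∈ B, ∀ t, 0 < P s t → t ∈ B)
    {m : ℕ} {π : ℕ → S} (h : IsWalk P m π) (h0 : π 0 ∈ B) : ∀ k ≤ m, π k ∈ B
  | 0, _ => h0
  | k + 1, hk => hB _ (h.mem_of_isClosed hB h0 k (by omega)) _ (h k hk)

lemma IsWalk.splice {k m : ℕ} {q u : ℕ → S} (hq : IsWalk P k q) (hu : IsWalk P m u)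
    (hqu : q k = u 0) : IsWalk P (k + m) (splice k q u) := by
  intro i hi
  simp only [BoundedBuchi.splice]
  rcases lt_trichotomy (i + 1) k with h | h | h
  · rw [if_pos (by omega), if_pos h]
    exact hq i (by omega)
  · rw [if_pos (by omega), if_neg (by omega), show i + 1 - k = 0 by omega, ← hqu, ← h]
    exact hq i (by omega)
  · rw [if_neg (by omega), if_neg (by omega), show i + 1 - k = i - k + 1 by omega]
    exact hu _ (by omega)

lemma pathWeight_pos {m : ℕ} {π : ℕ → S} (h : IsWalk P m π) : 0 < pathWeight P m π :=
  CanonicallyOrderedAdd.prod_pos.2 fun i hi => h i (mem_range.1 hi)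

lemma pathWeight_succ (m : ℕ) (π : ℕ → S) :
    pathWeight P (m + 1) π = P (π 0) (π 1) * pathWeight P m (fun i => π (i + 1)) := by
  rw [pathWeight, prod_range_succ', mul_comm]
  rfl

end Paths

@[simp]
lemma splice_zero (π π' : ℕ → S) : splice 0 π π' = π' := by
  funext k
  simp [splice]

lemma splice_succ_prepend (d : ℕ) (t : S) (π π' : ℕ → S) :
    splice (d + 1) (prepend t π) π' = prepend t (splice d π π') := by
  funext k
  cases k with
  | zero => rfl
  | succ k => simp only [splice, prepend, Nat.add_lt_add_iff_right, Nat.add_sub_add_right]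

lemma extendWord_cons {m : ℕ} (t : S) (w : Fin (m + 1) → S) :
    extendWord (Fin.cons t w : Fin (m + 2) → S) = prepend t (extendWord w) := by
  funext k
  cases k with
  | zero => rfl
  | succ k =>
    simp only [extendWord, prepend]
    rw [show Fin.clamp (k + 1) (m + 1) = (Fin.clamp k m).succ from Fin.ext (by simp [Fin.clamp]),
      Fin.cons_succ]

section Windows

variable {p : S → Prop} {n m : ℕ} {π π' : ℕ → S}

lemma HitsEveryWindow.congr (h : ∀ k ≤ m, π k = π' k) (hπ : HitsEveryWindow p n m π) :
    HitsEveryWindow p n m π' := fun i hi => by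
  obtain ⟨j, hij, hjn, hj⟩ := hπ i hi
  exact ⟨j, hij, hjn, h j (by omega) ▸ hj⟩

lemma HitsEveryWindow.of_splice {d : ℕ} (h : π' 0 = π d)
    (hπ : HitsEveryWindow p n (d + m) (splice d π π')) :
    HitsEveryWindow p n d π ∧ HitsEveryWindow p n m π' := by
  constructor
  · refine HitsEveryWindow.congr (m := d) (fun k hk => ?_) fun i hi => hπ i (by omega)
    rcases hk.lt_or_eq with hk | rfl
    · simp [splice, hk]
    · simp [splice, h]
  · intro i hi
    obtain ⟨j, hij, hjn, hj⟩ := hπ (d + i) (by omega)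
    refine ⟨j - d, by omega, by omega, ?_⟩
    simpa [splice, show ¬ j < d by omega] using hj

end Windows

variable [Fintype S] (P : S → S → ℝ≥0∞)

/-- The expectation of `F` over the first `m` steps of the chain started in `t`; `F` is evaluated
on paths that stay in their state at step `m`. -/
noncomputable def pathSum : ℕ → S → ((ℕ → S) → ℝ≥0∞) → ℝ≥0∞
  | 0, t, F => F fun _ => t
  | m + 1, t, F => ∑ t', P t t' * pathSum m t' fun π => F (prepend t π)

variable {P}

lemma pathSum_const (hP : ∀ s, ∑ t, P s t = 1) (m : ℕ) (t : S) (c : ℝ≥0∞) :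
    pathSum P m t (fun _ => c) = c := by
  induction m generalizing t with
  | zero => rfl
  | succ m ih => simp only [pathSum, ih, ← sum_mul, hP, one_mul]

lemma pathSum_add (m : ℕ) (t : S) (F G : (ℕ → S) → ℝ≥0∞) :
    pathSum P m t (fun π => F π + G π) = pathSum P m t F + pathSum P m t G := by
  induction m generalizing t F G with
  | zero => rfl
  | succ m ih => simp only [pathSum, ih, mul_add, sum_add_distrib]

lemma pathSum_const_mul (m : ℕ) (t : S) (c : ℝ≥0∞) (F : (ℕ → S) → ℝ≥0∞) :
    pathSum P m t (fun π => c * F π) = c * pathSum P m t F := by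
  induction m generalizing t F with
  | zero => rfl
  | succ m ih => simp only [pathSum, ih, mul_sum, mul_left_comm c]

lemma pathSum_mono_of_isWalk {m : ℕ} {t : S} {F G : (ℕ → S) → ℝ≥0∞}
    (h : ∀ π, π 0 = t → IsWalk P m π → F π ≤ G π) : pathSum P m t F ≤ pathSum P m t G := by
  induction m generalizing t F G with
  | zero => exact h _ rfl fun i hi => absurd hi (Nat.not_lt_zero i)
  | succ m ih =>
    refine sum_le_sum fun t' _ => ?_
    rcases eq_zero_or_pos (P t t') with h0 | hpos
    · simp [h0]
    · gcongr
      exact ih fun π hπ hw => h _ rfl (isWalk_succ_prepend.2 ⟨hπ ▸ hpos, hw⟩)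

lemma pathSum_add_steps (d m : ℕ) (t : S) (F : (ℕ → S) → ℝ≥0∞) :
    pathSum P (d + m) t F =
      pathSum P d t fun π => pathSum P m (π d) fun π' => F (splice d π π') := by
  induction d generalizing t F with
  | zero => simp [pathSum]
  | succ d ih =>
    simp only [Nat.succ_add, pathSum, ih, splice_succ_prepend]
    rfl

lemma pathWeight_mul_le_pathSum {l : ℕ} {ρ : ℕ → S} {c : ℝ≥0∞} {F : (ℕ → S) → ℝ≥0∞}
    (hF : ∀ π, (∀ k ≤ l, π k = ρ k) → c ≤ F π) :
    pathWeight P l ρ * c ≤ pathSum P l (ρ 0) F := by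
  induction l generalizing ρ F with
  | zero => simpa [pathWeight, pathSum] using hF _ fun k hk => by rw [Nat.le_zero.1 hk]
  | succ l ih =>
    rw [pathWeight_succ, mul_assoc]
    calc P (ρ 0) (ρ 1) * (pathWeight P l (fun i => ρ (i + 1)) * c)
        ≤ P (ρ 0) (ρ 1) * pathSum P l (ρ 1) fun π => F (prepend (ρ 0) π) := by
          gcongr
          refine ih fun π hπ => hF _ fun k hk => ?_
          rcases k with _ | k
          exacts [rfl, hπ k (by omega)]
      _ ≤ pathSum P (l + 1) (ρ 0) F :=
          single_le_sum (f := fun t' => P (ρ 0) t' * pathSum P l t' _)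
            (fun _ _ => zero_le) (mem_univ _)

section Cylinders

variable [DecidableEq S]

lemma sum_extendWord_eq_pathSum (m : ℕ) (t : S) (F : (ℕ → S) → ℝ≥0∞) :
    ∑ v : Fin (m + 1) → S,
      (if extendWord v 0 = t then 1 else 0) * pathWeight P m (extendWord v) * F (extendWord v) =
      pathSum P m t F := by
  induction m generalizing t F with
  | zero =>
    rw [Fintype.sum_eq_single (fun _ => t) fun v hv => ?_]
    · simp [extendWord, pathWeight, pathSum]
      rfl
    · have : extendWord v 0 ≠ t := fun h =>
        hv (funext fun i => by rw [Fin.fin_one_eq_zero i]; exact h)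
      simp [this]
  | succ m ih =>
    rw [← (Fin.consEquiv fun _ : Fin (m + 2) => S).sum_comp, Fintype.sum_prod_type]
    simp only [Fin.consEquiv, Equiv.coe_fn_mk, extendWord_cons]
    rw [Fintype.sum_eq_single t fun x hx => by simp [prepend, hx]]
    simp only [pathSum, ← ih, mul_sum]
    rw [sum_comm]
    refine sum_congr rfl fun w _ => ?_
    rw [pathWeight_succ]
    simp [prepend, mul_assoc]

open scoped Classical in
/-- Only subadditivity of `μ` is used: the cylinders need not be measurable, since `S` carries an
arbitrary σ-algebra. -/
lemma measure_le_pathSum [MeasurableSpace S] {μ : Measure (ℕ → S)} {s : S}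
    (hcyl : ∀ (m : ℕ) (u : ℕ → S), μ {π | ∀ k ≤ m, π k = u k} =
      (if u 0 = s then 1 else 0) * ∏ k ∈ range m, P (u k) (u (k + 1)))
    {m : ℕ} {Q : (ℕ → S) → Prop} (hQ : ∀ π π', (∀ k ≤ m, π k = π' k) → Q π → Q π') :
    μ {π | Q π} ≤ pathSum P m s fun π => if Q π then 1 else 0 := by
  classical
  have hcover : {π | Q π} ⊆ ⋃ v ∈ univ.filter (fun v : Fin (m + 1) → S => Q (extendWord v)),
      {π | ∀ k ≤ m, π k = extendWord v k} := by
    intro π hπ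
    have hagree : ∀ k ≤ m, π k = extendWord (fun i : Fin (m + 1) => π i) k := fun k hk => by
      simp [extendWord, Fin.clamp, min_eq_left hk]
    exact Set.mem_iUnion₂.2 ⟨_, mem_filter.2 ⟨mem_univ _, hQ π _ hagree hπ⟩, hagree⟩
  calc μ {π | Q π}
      ≤ ∑ v ∈ univ.filter (fun v : Fin (m + 1) → S => Q (extendWord v)),
          μ {π | ∀ k ≤ m, π k = extendWord v k} :=
        (measure_mono hcover).trans (measure_biUnion_finset_le _ _)
    _ = _ := by
      rw [sum_filter, ← sum_extendWord_eq_pathSum]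
      refine sum_congr rfl fun v _ => ?_
      rw [hcyl]
      split_ifs <;> simp [pathWeight]

end Cylinders

open scoped Classical in
noncomputable def probHitsEveryWindow (P : S → S → ℝ≥0∞) (p : S → Prop) (n m : ℕ) (t : S) :
    ℝ≥0∞ :=
  pathSum P m t fun π => if HitsEveryWindow p n m π then 1 else 0

variable {p : S → Prop} {n : ℕ}

lemma probHitsEveryWindow_antitone (hP : ∀ s, ∑ t, P s t = 1) {l D : ℕ} (h : l ≤ D) (t : S) :
    probHitsEveryWindow P p n D t ≤ probHitsEveryWindow P p n l t := by
  classical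
  obtain ⟨r, rfl⟩ := Nat.exists_eq_add_of_le h
  rw [probHitsEveryWindow, pathSum_add_steps]
  refine pathSum_mono_of_isWalk fun π _ _ => ?_
  calc _ ≤ pathSum P r (π l) (fun _ => if HitsEveryWindow p n l π then 1 else 0) :=
        pathSum_mono_of_isWalk fun π' hπ' _ => by
          by_cases hπ : HitsEveryWindow p n (l + r) (splice l π π')
          · simp [hπ, (hπ.of_splice hπ').1]
          · simp [hπ]
    _ = _ := pathSum_const hP _ _ _

lemma probHitsEveryWindow_lt_one (hP : ∀ s, ∑ t, P s t = 1) {l : ℕ} {ρ : ℕ → S}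
    (hρ : IsWalk P l ρ) (hbad : ¬ HitsEveryWindow p n l ρ) :
    probHitsEveryWindow P p n l (ρ 0) < 1 := by
  classical
  have hescape : pathWeight P l ρ * 1 ≤
      pathSum P l (ρ 0) fun π => if HitsEveryWindow p n l π then 0 else 1 :=
    pathWeight_mul_le_pathSum fun π hπ => by rw [if_neg fun h => hbad (h.congr hπ)]
  have htotal : probHitsEveryWindow P p n l (ρ 0) +
      pathSum P l (ρ 0) (fun π => if HitsEveryWindow p n l π then 0 else 1) = 1 := by
    rw [probHitsEveryWindow, ← pathSum_add]
    convert pathSum_const hP l (ρ 0) 1 using 2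
    funext π
    split_ifs <;> simp
  have hfin : probHitsEveryWindow P p n l (ρ 0) ≠ ∞ :=
    ne_top_of_le_ne_top ENNReal.one_ne_top (htotal ▸ le_self_add)
  calc _ < probHitsEveryWindow P p n l (ρ 0) + pathWeight P l ρ :=
        ENNReal.lt_add_right hfin (pathWeight_pos hρ).ne'
    _ ≤ 1 := htotal ▸ add_le_add_right (by simpa using hescape) _

lemma probHitsEveryWindow_le_pow {B : Set S} (hB : ∀ s ∈ B, ∀ t, 0 < P s t → t ∈ B)
    {D : ℕ} {r : ℝ≥0∞} (hr : ∀ t ∈ B, probHitsEveryWindow P p n D t ≤ r) (K : ℕ) {t : S}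
    (ht : t ∈ B) : probHitsEveryWindow P p n (K * D) t ≤ r ^ K := by
  classical
  induction K generalizing t with
  | zero => simp only [probHitsEveryWindow, zero_mul, pathSum, pow_zero]; split_ifs <;> simp
  | succ K ih =>
    rw [probHitsEveryWindow, Nat.succ_mul, add_comm, pathSum_add_steps]
    calc _ ≤ pathSum P D t (fun π => r ^ K * if HitsEveryWindow p n D π then 1 else 0) := by
          refine pathSum_mono_of_isWalk fun π hπ hwalk => ?_
          have hπD : π D ∈ B := hwalk.mem_of_isClosed hB (hπ ▸ ht) D le_rfl
          calc _ ≤ pathSum P (K * D) (π D) (fun π' => (if HitsEveryWindow p n D π then 1 else 0) *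
                  if HitsEveryWindow p n (K * D) π' then 1 else 0) :=
                pathSum_mono_of_isWalk fun π' hπ' _ => by
                  by_cases h : HitsEveryWindow p n (D + K * D) (splice D π π')
                  · simp [h, (h.of_splice hπ').1, (h.of_splice hπ').2]
                  · simp [h]
            _ ≤ _ := by
                rw [pathSum_const_mul, mul_comm]
                gcongr
                exact ih hπD
      _ = r ^ K * probHitsEveryWindow P p n D t := pathSum_const_mul _ _ _ _
      _ ≤ r ^ (K + 1) := by
          rw [pow_succ]
          gcongr
          exact hr t ht

lemma exists_probHitsEveryWindow_le_lt_one (hP : ∀ s, ∑ t, P s t = 1) {B : Set S}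
    (hBne : B.Nonempty) (hBconn : ∀ s ∈ B, ∀ t ∈ B, ∃ (k : ℕ) (q : ℕ → S),
      q 0 = s ∧ q k = t ∧ IsWalk P k q)
    {u : ℕ → S} (hu : IsAvoidingFragment P B p n u) :
    ∃ D r, r < 1 ∧ ∀ t ∈ B, probHitsEveryWindow P p n D t ≤ r := by
  obtain ⟨hfree, hu⟩ := hu
  have hescape : ∀ t ∈ B, ∃ l, probHitsEveryWindow P p n l t < 1 := by
    intro t ht
    obtain ⟨k, q, hq0, hqk, hq⟩ := hBconn t ht (u 0) (hfree 0 n.zero_le).1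
    have hstart : splice k q u 0 = t := by
      rcases k.eq_zero_or_pos with rfl | hk
      · simp [← hqk, hq0]
      · simp [splice, hk, hq0]
    refine ⟨k + n, hstart ▸ probHitsEveryWindow_lt_one hP (hq.splice hu hqk) fun hw => ?_⟩
    obtain ⟨j, hkj, hjn, hj⟩ := hw k le_rfl
    exact (hfree (j - k) (by omega)).2 (by simpa [splice, show ¬ j < k by omega] using hj)
  choose! l hl using hescape
  obtain ⟨t₀, ht₀, hmax⟩ :=
    B.exists_max_image (probHitsEveryWindow P p n (univ.sup l)) B.toFinite hBne
  exact ⟨_, _, (probHitsEveryWindow_antitone hP (le_sup (mem_univ t₀)) t₀).trans_lt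
    (hl t₀ ht₀), hmax⟩

variable [DecidableEq S] [MeasurableSpace S] {μ : Measure (ℕ → S)} {s : S}

lemma measure_boundedBuchi_eq_zero (hP : ∀ s, ∑ t, P s t = 1) {B : Set S}
    (hB : ∀ s ∈ B, ∀ t, 0 < P s t → t ∈ B) (hBne : B.Nonempty)
    (hBconn : ∀ s ∈ B, ∀ t ∈ B, ∃ (k : ℕ) (q : ℕ → S), q 0 = s ∧ q k = t ∧ IsWalk P k q)
    (hs : s ∈ B)
    (hcyl : ∀ (m : ℕ) (u : ℕ → S), μ {π | ∀ k ≤ m, π k = u k} =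
      (if u 0 = s then 1 else 0) * ∏ k ∈ range m, P (u k) (u (k + 1)))
    (hfrag : ∃ u, IsAvoidingFragment P B p n u) :
    μ {π | ∀ i, ∃ j, i ≤ j ∧ j ≤ i + n ∧ p (π j)} = 0 := by
  obtain ⟨u, hu⟩ := hfrag
  obtain ⟨D, r, hr, hDr⟩ := exists_probHitsEveryWindow_le_lt_one hP hBne hBconn hu
  have hpow : ∀ K, μ {π | ∀ i, ∃ j, i ≤ j ∧ j ≤ i + n ∧ p (π j)} ≤ r ^ K := fun K =>
    calc _ ≤ μ {π | HitsEveryWindow p n (K * D) π} :=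
        measure_mono (Set.ofPred_subset_ofPred.2 fun _ hπ i _ => hπ i)
      _ ≤ probHitsEveryWindow P p n (K * D) s :=
        measure_le_pathSum hcyl fun _ _ h hπ => hπ.congr h
      _ ≤ r ^ K := probHitsEveryWindow_le_pow hB hDr K hs
  exact nonpos_iff_eq_zero.1
    (ge_of_tendsto' (ENNReal.tendsto_pow_atTop_nhds_zero_of_lt_one hr) hpow)

lemma measure_boundedBuchi_eq_one [IsProbabilityMeasure μ] (hP : ∀ s, ∑ t, P s t = 1)
    {B : Set S} (hB : ∀ s ∈ B, ∀ t, 0 < P s t → t ∈ B) (hs : s ∈ B)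
    (hcyl : ∀ (m : ℕ) (u : ℕ → S), μ {π | ∀ k ≤ m, π k = u k} =
      (if u 0 = s then 1 else 0) * ∏ k ∈ range m, P (u k) (u (k + 1)))
    (hfrag : ¬ ∃ u, IsAvoidingFragment P B p n u) :
    μ {π | ∀ i, ∃ j, i ≤ j ∧ j ≤ i + n ∧ p (π j)} = 1 := by
  classical
  have hgap : ∀ i, μ {π | ∀ j, i ≤ j → j ≤ i + n → ¬ p (π j)} = 0 := fun i => by
    refine nonpos_iff_eq_zero.1 ((measure_le_pathSum hcyl (m := i + n)
      fun π π' h hπ j hij hjn => h j hjn ▸ hπ j hij hjn).trans ?_)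
    calc _ ≤ pathSum P (i + n) s (fun _ => 0) := pathSum_mono_of_isWalk fun π hπ hwalk => by
          rw [if_neg fun hfree => hfrag ⟨fun k => π (i + k), fun k hk =>
            ⟨hwalk.mem_of_isClosed hB (hπ ▸ hs) _ (by omega), hfree _ (by omega) (by omega)⟩,
            fun k hk => hwalk (i + k) (by omega)⟩]
      _ = 0 := pathSum_const hP _ _ _
  have hcompl : μ {π | ∀ i, ∃ j, i ≤ j ∧ j ≤ i + n ∧ p (π j)}ᶜ = 0 := by
    refine measure_mono_null (fun π hπ => ?_) (measure_iUnion_null hgap)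
    simpa [Set.mem_iUnion] using hπ
  refine le_antisymm prob_le_one ?_
  simpa [hcompl] using
    measure_univ_le_add_compl (μ := μ) {π | ∀ i, ∃ j, i ≤ j ∧ j ≤ i + n ∧ p (π j)}

lemma natCast_le_sSup_image_iff {T : Set ℕ} (hT : ∀ m ∈ T, ∀ k ≤ m, k ∈ T) (n : ℕ) :
    ((n : ℕ∞) : WithBot ℕ∞) ≤ sSup ((fun m : ℕ => ((m : ℕ∞) : WithBot ℕ∞)) '' T) ↔ n ∈ T := by
  refine ⟨fun h => ?_, fun hn => le_sSup ⟨n, hn, rfl⟩⟩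
  by_contra hn
  have hlt : ∀ m ∈ T, m < n := fun m hm => lt_of_not_ge fun hnm => hn (hT m hm n hnm)
  cases n with
  | zero =>
    have hT : T = ∅ := Set.eq_empty_of_forall_notMem fun m hm => Nat.not_lt_zero _ (hlt m hm)
    simp [hT] at h
  | succ k =>
    have hk : sSup ((fun m : ℕ => ((m : ℕ∞) : WithBot ℕ∞)) '' T) ≤ ((k : ℕ∞) : WithBot ℕ∞) :=
      sSup_le <| by
        rintro _ ⟨m, hm, rfl⟩
        show ((m : ℕ∞) : WithBot ℕ∞) ≤ _
        exact_mod_cast Nat.lt_succ_iff.1 (hlt m hm)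
    have := h.trans hk
    norm_cast at this
    omega

end BoundedBuchi

open BoundedBuchi in
theorem bounded_buchi_zero_one_law_general
    {AP S : Type} [Fintype S] [DecidableEq S] [MeasurableSpace S]
    (P : S → S → ℝ≥0∞) (hP : ∀ s, ∑ t, P s t = 1)
    (L : S → Set AP) (a : AP)
    (B : Set S)
    -- B is a BSCC: a nonempty set of mutually reachable states with no edge leaving B
    (hBne : B.Nonempty)
    (hBconn : ∀ s ∈ B, ∀ t ∈ B, ∃ (k : ℕ) (u : ℕ → S),
      u 0 = s ∧ u k = t ∧ ∀ i < k, 0 < P (u i) (u (i + 1)))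
    (hBclosed : ∀ s ∈ B, ∀ t, 0 < P s t → t ∈ B)
    -- n_{a,B}: supremum of the lengths of a-avoiding path fragments inside B
    (nab : WithBot ℕ∞)
    (hnab : nab = sSup ((fun m : ℕ => ((m : ℕ∞) : WithBot ℕ∞)) ''
      {m : ℕ | ∃ u : ℕ → S,
        (∀ i ≤ m, u i ∈ B ∧ a ∉ L (u i)) ∧ ∀ i < m, 0 < P (u i) (u (i + 1))}))
    (s : S) (hs : s ∈ B)
    -- Pr_s: the probability measure on paths starting in s
    (μ : Measure (ℕ → S)) (hprob : IsProbabilityMeasure μ)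
    (hcyl : ∀ (n : ℕ) (u : ℕ → S),
      μ {π | ∀ k ≤ n, π k = u k} =
        (if u 0 = s then 1 else 0) * ∏ k ∈ Finset.range n, P (u k) (u (k + 1)))
    (n : ℕ) :
    (μ {π | ∀ i : ℕ, ∃ j, i ≤ j ∧ j ≤ i + n ∧ a ∈ L (π j)} = 1 ↔
      nab < ((n : ℕ∞) : WithBot ℕ∞)) ∧
    (μ {π | ∀ i : ℕ, ∃ j, i ≤ j ∧ j ≤ i + n ∧ a ∈ L (π j)} = 0 ↔
      ((n : ℕ∞) : WithBot ℕ∞) ≤ nab) := by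
  have hfrag : ((n : ℕ∞) : WithBot ℕ∞) ≤ nab ↔ ∃ u, IsAvoidingFragment P B (a ∈ L ·) n u := by
    rw [hnab]
    refine natCast_le_sSup_image_iff ?_ n
    rintro m ⟨u, hu, hw⟩ k hk
    exact ⟨u, fun i hi => hu i (hi.trans hk), fun i hi => hw i (by omega)⟩
  by_cases h : ((n : ℕ∞) : WithBot ℕ∞) ≤ nab
  · rw [measure_boundedBuchi_eq_zero (p := (a ∈ L ·)) hP hBclosed hBne hBconn hs hcyl (hfrag.1 h)]
    exact ⟨iff_of_false zero_ne_one (not_lt.2 h), iff_of_true rfl h⟩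
  · rw [measure_boundedBuchi_eq_one (p := (a ∈ L ·)) hP hBclosed hs hcyl (mt hfrag.2 h)]
    exact ⟨iff_of_true rfl (not_le.1 h), iff_of_false one_ne_zero h⟩

/-- Zero-one law for bounded Büchi properties on a BSCC: for a finite Markov chain
`M = (S,P,s₀,L)`, a bottom strongly connected component `B`, `n_{a,B}` the supremum of the
lengths of path fragments staying inside `B` containing no `a`-state, any state `s ∈ B` and
any `n ∈ ℕ`: `Pr_s(□◇_{≤n} a) = 1` iff `n > n_{a,B}`, and `Pr_s(□◇_{≤n} a) = 0` iff
`n ≤ n_{a,B}`. -/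
theorem bounded_buchi_zero_one_law
    {AP S : Type} [Fintype S] [DecidableEq S] [MeasurableSpace S]
    (P : S → S → ℝ≥0∞) (hP : ∀ s, ∑ t, P s t = 1)
    (s₀ : S) (L : S → Set AP) (a : AP)
    (B : Set S)
    -- B is a BSCC: a nonempty set of mutually reachable states with no edge leaving B
    (hBne : B.Nonempty)
    (hBconn : ∀ s ∈ B, ∀ t ∈ B, ∃ (k : ℕ) (u : ℕ → S),
      u 0 = s ∧ u k = t ∧ ∀ i < k, 0 < P (u i) (u (i + 1)))
    (hBclosed : ∀ s ∈ B, ∀ t, 0 < P s t → t ∈ B)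
    -- n_{a,B}: supremum of the lengths of a-avoiding path fragments inside B
    (nab : WithBot ℕ∞)
    (hnab : nab = sSup ((fun m : ℕ => ((m : ℕ∞) : WithBot ℕ∞)) ''
      {m : ℕ | ∃ u : ℕ → S,
        (∀ i ≤ m, u i ∈ B ∧ a ∉ L (u i)) ∧ ∀ i < m, 0 < P (u i) (u (i + 1))}))
    (s : S) (hs : s ∈ B)
    -- Pr_s: the probability measure on paths starting in s
    (μ : Measure (ℕ → S)) (hprob : IsProbabilityMeasure μ)
    (hcyl : ∀ (n : ℕ) (u : ℕ → S),
      μ {π | ∀ k ≤ n, π k = u k} =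
        (if u 0 = s then 1 else 0) * ∏ k ∈ Finset.range n, P (u k) (u (k + 1)))
    (n : ℕ) :
    (μ {π | ∀ i : ℕ, ∃ j, i ≤ j ∧ j ≤ i + n ∧ a ∈ L (π j)} = 1 ↔
      nab < ((n : ℕ∞) : WithBot ℕ∞)) ∧
    (μ {π | ∀ i : ℕ, ∃ j, i ≤ j ∧ j ≤ i + n ∧ a ∈ L (π j)} = 0 ↔
      ((n : ℕ∞) : WithBot ℕ∞) ≤ nab) :=
  bounded_buchi_zero_one_law_general P hP L a B hBne hBconn hBclosed nab hnab s hs μ hprob hcyl n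
end
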